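/- arXiv:1706.04446 — 8 statements merged into one kernel-verified Lean document; each statement's English description precedes it below -/
import Mathlib

section
/- Let d ≥ 2 and let {|y_i⟩}_{i=1}^d and {|z_j⟩}_{j=1}^d be two orthonormal bases of ℂ^d. Then ∑_{i=1}^d ∑_{j=1}^d |⟨y_i|z_j⟩| ≤ d·√d, with equality if and only if the two bases are mutually unbiased (i.e. |⟨y_i|z_j⟩| = 1/√d for all i, j). Consequently, the average success probability (1/(2d²))·∑_{i,j} λ_max(|y_i⟩⟨y_i| + |z_j⟩⟨z_j|) of a 2^d→1 quantum random access code with these measurement bases is at most (1/2)(1 + 1/√d), with equality exactly for mutually unbiased bases. -/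
open scoped InnerProductSpace

/-- The rank-one projection matrix `|v⟩⟨v|` associated to a vector `v ∈ ℂ^d`. -/
noncomputable def projMat {d : ℕ} (v : EuclideanSpace ℂ (Fin d)) : Matrix (Fin d) (Fin d) ℂ :=
  fun i j => v i * (starRingEnd ℂ) (v j)

/-- The largest eigenvalue of a Hermitian matrix (junk value `0` otherwise). -/
noncomputable def lamMax {d : ℕ} (M : Matrix (Fin d) (Fin d) ℂ) : ℝ :=
  if h : M.IsHermitian then ⨆ i, h.eigenvalues i else 0

/-!
By Parseval the `d²` overlaps `‖⟪y_i, z_j⟫‖` have squares summing to `d`; expanding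
`∑ (‖⟪y_i, z_j⟫‖ - 1/√d)² ≥ 0` then bounds their sum by `d√d`, with equality iff every overlap
is `1/√d`.

For unit vectors `y, z` the top eigenvalue of `|y⟩⟨y| + |z⟩⟨z|` is `1 + ‖⟪y, z⟫‖`: every
Rayleigh quotient is at most that, by Cauchy–Schwarz against `⟪y, x⟫ y + ⟪z, x⟫ z`, and
`y + s z`, with `s` the phase of `⟪z, y⟫`, is an eigenvector attaining it. So the QRAC average is
`1/2 + S/(2d²)` with `S` the sum of overlaps, and the first part applies.
-/

section InnerProductSpace

variable {𝕜 E : Type*} [RCLike 𝕜] [NormedAddCommGroup E] [InnerProductSpace 𝕜 E]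

theorem inner_inner_smul_add_inner_smul (x y z : E) :
    ⟪x, ⟪y, x⟫_𝕜 • y + ⟪z, x⟫_𝕜 • z⟫_𝕜 = ((‖⟪y, x⟫_𝕜‖ ^ 2 + ‖⟪z, x⟫_𝕜‖ ^ 2 : ℝ) : 𝕜) := by
  rw [inner_add_right, inner_smul_right, inner_smul_right, ← inner_conj_symm x y,
    ← inner_conj_symm x z, RCLike.mul_conj, RCLike.mul_conj]
  push_cast
  rfl

theorem norm_inner_sq_add_norm_inner_sq_le {y z : E} (hy : ‖y‖ = 1) (hz : ‖z‖ = 1) (x : E) :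
    ‖⟪y, x⟫_𝕜‖ ^ 2 + ‖⟪z, x⟫_𝕜‖ ^ 2 ≤ (1 + ‖⟪y, z⟫_𝕜‖) * ‖x‖ ^ 2 := by
  set a := ⟪y, x⟫_𝕜
  set b := ⟪z, x⟫_𝕜
  set t := ‖a‖ ^ 2 + ‖b‖ ^ 2
  set w := a • y + b • z
  have ht : t ≤ ‖x‖ * ‖w‖ := by
    have h := norm_inner_le_norm (𝕜 := 𝕜) x w
    rwa [inner_inner_smul_add_inner_smul, RCLike.norm_ofReal, abs_of_nonneg (by positivity)] at h
  have hw : ‖w‖ ^ 2 ≤ t * (1 + ‖⟪y, z⟫_𝕜‖) := by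
    have hcross : RCLike.re ⟪a • y, b • z⟫_𝕜 ≤ ‖a‖ * ‖b‖ * ‖⟪y, z⟫_𝕜‖ := by
      refine (RCLike.re_le_norm _).trans_eq ?_
      rw [inner_smul_left, inner_smul_right, norm_mul, norm_mul, RCLike.norm_conj, mul_assoc]
    rw [norm_add_sq (𝕜 := 𝕜), norm_smul, norm_smul, hy, hz]
    nlinarith [sq_nonneg (‖a‖ - ‖b‖), norm_nonneg ⟪y, z⟫_𝕜]
  -- `t ^ 2 ≤ ‖x‖ ^ 2 ‖w‖ ^ 2 ≤ t (1 + ‖⟪y, z⟫‖) ‖x‖ ^ 2`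
  have ht0 : 0 ≤ t := by positivity
  have hsq := mul_self_le_mul_self ht0 ht
  have hxw := mul_le_mul_of_nonneg_left hw (sq_nonneg ‖x‖)
  by_contra! hlt
  nlinarith [mul_lt_mul_of_pos_left hlt (hlt.trans_le' (by positivity))]

theorem exists_ne_zero_inner_smul_add_inner_smul_eq {y z : E} (hy : ‖y‖ = 1) (hz : ‖z‖ = 1) :
    ∃ w : E, w ≠ 0 ∧ ⟪y, w⟫_𝕜 • y + ⟪z, w⟫_𝕜 • z = ((1 + ‖⟪y, z⟫_𝕜‖ : ℝ) : 𝕜) • w := by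
  set c := ⟪y, z⟫_𝕜
  -- `s` is the phase of `conj c`; when `c = 0` the junk value `s = 0` still works.
  set s : 𝕜 := starRingEnd 𝕜 c / (‖c‖ : 𝕜)
  have hsc : s * c = ‖c‖ := by
    rw [div_mul_eq_mul_div, RCLike.conj_mul, pow_two, mul_self_div_self]
  have hcs : (‖c‖ : 𝕜) * s = starRingEnd 𝕜 c := by
    rw [← mul_div_assoc]
    exact mul_div_cancel_left_of_imp fun h => by
      rw [norm_eq_zero.mp (RCLike.ofReal_eq_zero.mp h), map_zero]
  have hyw : ⟪y, y + s • z⟫_𝕜 = 1 + ‖c‖ := by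
    rw [inner_add_right, inner_smul_right, inner_self_eq_norm_sq_to_K, hy, hsc]
    simp
  have hzw : ⟪z, y + s • z⟫_𝕜 = (1 + ‖c‖) * s := by
    rw [inner_add_right, inner_smul_right, inner_self_eq_norm_sq_to_K, hz, ← inner_conj_symm,
      ← hcs]
    push_cast
    ring
  refine ⟨y + s • z, fun h => ?_, ?_⟩
  · have h1 : (1 + ‖c‖ : 𝕜) = 0 := by rw [← hyw, h, inner_zero_right]
    have h2 : (1 + ‖c‖ : ℝ) = 0 := by exact_mod_cast h1
    linarith [norm_nonneg c]
  · rw [hyw, hzw, smul_add, mul_smul]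
    push_cast
    rfl

end InnerProductSpace

section SumOfSquares

variable {ι : Type*} [Fintype ι] (f : ι → ℝ) {c : ℝ}

theorem Fintype.sum_sub_sq_eq_of_sum_sq_eq (h : ∑ i, f i ^ 2 = Fintype.card ι * c ^ 2) :
    ∑ i, (f i - c) ^ 2 = 2 * c * (Fintype.card ι * c - ∑ i, f i) := by
  simp only [sub_sq, Finset.sum_add_distrib, Finset.sum_sub_distrib, ← Finset.sum_mul,
    ← Finset.mul_sum, h, Finset.sum_const, Finset.card_univ, nsmul_eq_mul]
  ring

theorem Fintype.sum_le_card_mul_of_sum_sq_eq (hc : 0 < c)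
    (h : ∑ i, f i ^ 2 = Fintype.card ι * c ^ 2) : ∑ i, f i ≤ Fintype.card ι * c := by
  have hsum := Fintype.sum_sub_sq_eq_of_sum_sq_eq f h
  have hnonneg : 0 ≤ ∑ i, (f i - c) ^ 2 := Finset.sum_nonneg fun i _ => sq_nonneg _
  nlinarith

theorem Fintype.sum_eq_card_mul_iff_of_sum_sq_eq (hc : 0 < c)
    (h : ∑ i, f i ^ 2 = Fintype.card ι * c ^ 2) :
    ∑ i, f i = Fintype.card ι * c ↔ ∀ i, f i = c := by
  have hsum := Fintype.sum_sub_sq_eq_of_sum_sq_eq f h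
  calc ∑ i, f i = Fintype.card ι * c ↔ ∑ i, (f i - c) ^ 2 = 0 := by
        rw [hsum, mul_eq_zero, sub_eq_zero, eq_comm]; simp [hc.ne']
    _ ↔ ∀ i, f i = c := by
        simp [Finset.sum_eq_zero_iff_of_nonneg, sq_nonneg, sub_eq_zero]

end SumOfSquares

theorem Real.mul_self_mul_one_div_sqrt (x : ℝ) : x * x * (1 / √x) = x * √x := by
  rw [mul_one_div, mul_div_assoc, Real.div_sqrt]

namespace OrthonormalBasis

variable {𝕜 E ι : Type*} [RCLike 𝕜] [NormedAddCommGroup E] [InnerProductSpace 𝕜 E] [Fintype ι]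

theorem sum_sum_sq_norm_inner {ι' : Type*} [Fintype ι']
    (b : OrthonormalBasis ι 𝕜 E) (b' : OrthonormalBasis ι' 𝕜 E) :
    ∑ i, ∑ j, ‖⟪b i, b' j⟫_𝕜‖ ^ 2 = Fintype.card ι' := by
  rw [Finset.sum_comm]
  simp [b.sum_sq_norm_inner_right, b'.orthonormal.1]

variable [Nonempty ι] (b b' : OrthonormalBasis ι 𝕜 E)

theorem sum_sq_norm_inner_prod_eq :
    ∑ p : ι × ι, ‖⟪b p.1, b' p.2⟫_𝕜‖ ^ 2
      = Fintype.card (ι × ι) * (1 / √(Fintype.card ι)) ^ 2 := by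
  have hn : (0 : ℝ) < Fintype.card ι := by exact_mod_cast Fintype.card_pos
  rw [Fintype.sum_prod_type, b.sum_sum_sq_norm_inner b', Fintype.card_prod, div_pow,
    Real.sq_sqrt hn.le]
  field_simp
  push_cast
  ring

theorem sum_sum_norm_inner_le :
    ∑ i, ∑ j, ‖⟪b i, b' j⟫_𝕜‖ ≤ Fintype.card ι * √(Fintype.card ι) := by
  have h := Fintype.sum_le_card_mul_of_sum_sq_eq _ (by positivity) (sum_sq_norm_inner_prod_eq b b')
  rwa [Fintype.sum_prod_type, Fintype.card_prod, Nat.cast_mul, Real.mul_self_mul_one_div_sqrt] at h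

theorem sum_sum_norm_inner_eq_iff :
    ∑ i, ∑ j, ‖⟪b i, b' j⟫_𝕜‖ = Fintype.card ι * √(Fintype.card ι) ↔
      ∀ i j, ‖⟪b i, b' j⟫_𝕜‖ = 1 / √(Fintype.card ι) := by
  have h := Fintype.sum_eq_card_mul_iff_of_sum_sq_eq _ (by positivity)
    (sum_sq_norm_inner_prod_eq b b')
  rwa [Fintype.sum_prod_type, Fintype.card_prod, Nat.cast_mul, Real.mul_self_mul_one_div_sqrt,
    Prod.forall] at h

end OrthonormalBasis

open Matrix

theorem Matrix.mem_spectrum_real_iff {𝕜 n : Type*} [RCLike 𝕜] [Fintype n] [DecidableEq n]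
    (M : Matrix n n 𝕜) (μ : ℝ) :
    μ ∈ spectrum ℝ M ↔ ∃ x : EuclideanSpace 𝕜 n, x ≠ 0 ∧ toLpLin 2 2 M x = (μ : 𝕜) • x := by
  rw [← spectrum.algebraMap_mem_iff 𝕜, ← spectrum_toLpLin 2,
    ← Module.End.hasEigenvalue_iff_mem_spectrum, RCLike.algebraMap_eq_ofReal]
  refine ⟨fun h => ?_, fun ⟨x, hx0, hx⟩ => ?_⟩
  · obtain ⟨x, hx⟩ := h.exists_hasEigenvector
    exact ⟨x, hx.2, hx.apply_eq_smul⟩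
  · exact Module.End.hasEigenvalue_of_hasEigenvector ⟨Module.End.mem_eigenspace_iff.2 hx, hx0⟩

theorem projMat_isHermitian {d : ℕ} (v : EuclideanSpace ℂ (Fin d)) : (projMat v).IsHermitian := by
  ext i j
  simp [projMat, mul_comm]

theorem toLpLin_projMat {d : ℕ} (v x : EuclideanSpace ℂ (Fin d)) :
    toLpLin 2 2 (projMat v) x = ⟪v, x⟫_ℂ • v := by
  have : projMat v = vecMulVec (WithLp.ofLp v) (star (WithLp.ofLp v)) := rfl
  rw [this, toLpLin_apply, vecMulVec_mulVec, EuclideanSpace.inner_eq_star_dotProduct,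
    dotProduct_comm, op_smul_eq_smul, WithLp.toLp_smul, WithLp.toLp_ofLp]

theorem lamMax_eq_sSup_spectrum {d : ℕ} {M : Matrix (Fin d) (Fin d) ℂ} (hM : M.IsHermitian) :
    lamMax M = sSup (spectrum ℝ M) := by
  rw [lamMax, dif_pos hM, hM.spectrum_real_eq_range_eigenvalues]
  rfl

theorem isGreatest_spectrum_projMat_add {d : ℕ} {y z : EuclideanSpace ℂ (Fin d)}
    (hy : ‖y‖ = 1) (hz : ‖z‖ = 1) :
    IsGreatest (spectrum ℝ (projMat y + projMat z)) (1 + ‖⟪y, z⟫_ℂ‖) := by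
  have hM (x : EuclideanSpace ℂ (Fin d)) :
      toLpLin 2 2 (projMat y + projMat z) x = ⟪y, x⟫_ℂ • y + ⟪z, x⟫_ℂ • z := by
    rw [map_add, LinearMap.add_apply, toLpLin_projMat, toLpLin_projMat]
  constructor
  · obtain ⟨w, hw0, hw⟩ := exists_ne_zero_inner_smul_add_inner_smul_eq (𝕜 := ℂ) hy hz
    exact (mem_spectrum_real_iff _ _).2 ⟨w, hw0, by rw [hM, hw]⟩
  · intro μ hμ
    obtain ⟨x, hx0, hx⟩ := (mem_spectrum_real_iff _ _).1 hμ
    have hrayleigh : μ * ‖x‖ ^ 2 = ‖⟪y, x⟫_ℂ‖ ^ 2 + ‖⟪z, x⟫_ℂ‖ ^ 2 := by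
      have h := inner_inner_smul_add_inner_smul (𝕜 := ℂ) x y z
      rw [← hM, hx, inner_smul_right, inner_self_eq_norm_sq_to_K] at h
      exact_mod_cast h
    have hle := norm_inner_sq_add_norm_inner_sq_le (𝕜 := ℂ) hy hz x
    rw [← hrayleigh] at hle
    exact le_of_mul_le_mul_right hle (by positivity)

theorem lamMax_projMat_add {d : ℕ} {y z : EuclideanSpace ℂ (Fin d)}
    (hy : ‖y‖ = 1) (hz : ‖z‖ = 1) :
    lamMax (projMat y + projMat z) = 1 + ‖⟪y, z⟫_ℂ‖ := by
  rw [lamMax_eq_sSup_spectrum ((projMat_isHermitian y).add (projMat_isHermitian z)),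
    (isGreatest_spectrum_projMat_add hy hz).csSup_eq]

/-- For two orthonormal bases of `ℂ^d` (`d ≥ 2`), the sum of the moduli of mutual overlaps is
at most `d·√d`, with equality iff the bases are mutually unbiased; consequently the average
success probability of the associated `2^d → 1` QRAC is at most `(1/2)(1 + 1/√d)`, with
equality exactly for mutually unbiased bases. -/
theorem stmt_0 (d : ℕ) (hd : 2 ≤ d)
    (Y Z : OrthonormalBasis (Fin d) ℂ (EuclideanSpace ℂ (Fin d))) :
    (∑ i, ∑ j, ‖⟪Y i, Z j⟫_ℂ‖) ≤ d * Real.sqrt d ∧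
    ((∑ i, ∑ j, ‖⟪Y i, Z j⟫_ℂ‖) = d * Real.sqrt d ↔
      ∀ i j, ‖⟪Y i, Z j⟫_ℂ‖ = 1 / Real.sqrt d) ∧
    (1 / (2 * (d : ℝ) ^ 2) * ∑ i, ∑ j, lamMax (projMat (Y i) + projMat (Z j))
        ≤ 1 / 2 * (1 + 1 / Real.sqrt d)) ∧
    (1 / (2 * (d : ℝ) ^ 2) * ∑ i, ∑ j, lamMax (projMat (Y i) + projMat (Z j))
        = 1 / 2 * (1 + 1 / Real.sqrt d) ↔
      ∀ i j, ‖⟪Y i, Z j⟫_ℂ‖ = 1 / Real.sqrt d) := by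
  have : Nonempty (Fin d) := ⟨⟨0, by omega⟩⟩
  have hle := Y.sum_sum_norm_inner_le Z
  have hiff := Y.sum_sum_norm_inner_eq_iff Z
  simp only [Fintype.card_fin] at hle hiff
  set S := ∑ i, ∑ j, ‖⟪Y i, Z j⟫_ℂ‖
  have hqrac : 1 / (2 * (d : ℝ) ^ 2) * ∑ i, ∑ j, lamMax (projMat (Y i) + projMat (Z j))
      = 1 / 2 * (1 + 1 / √d) + (S - d * √d) / (2 * d ^ 2) := by
    simp only [lamMax_projMat_add (Y.orthonormal.1 _) (Z.orthonormal.1 _),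
      Finset.sum_add_distrib, Finset.sum_const, Finset.card_univ, Fintype.card_fin, nsmul_eq_mul]
    rw [← Real.mul_self_mul_one_div_sqrt]
    field_simp
    ring
  have hgap : (S - d * √d) / (2 * d ^ 2) ≤ 0 :=
    div_nonpos_of_nonpos_of_nonneg (sub_nonpos.2 hle) (by positivity)
  refine ⟨hle, hiff, by linarith, ?_⟩
  rw [hqrac, add_eq_left, div_eq_zero_iff, sub_eq_zero, ← hiff, or_iff_left (by positivity)]
end

section
/- Let n ≥ 3 and suppose n orthonormal bases {|y_{x_y}⟩}_{x_y=1}^d (y = 1,…,n) of ℂ^d form an n-fold unbiased set (nUB). Then for every k ∈ {1,…,n}, the n−1 bases obtained by omitting the k-th basis form an (n−1)-fold unbiased set; that is, for all choices of indices x_y ∈ [d] (y ≠ k), ∑_{σ an (n−1)-cycle on {1,…,n}\{k}} ∏_{y≠k} ⟨y_{x_y}|σ(y)_{x_{σ(y)}}⟩ = (n−2)!/d^{n−2}. -/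
open scoped InnerProductSpace

open scoped Classical in
/-- The set of full cycles (`card ι`-cycles) in the permutation group of `ι`. -/
noncomputable def nCycles (ι : Type) [Fintype ι] [DecidableEq ι] : Finset (Equiv.Perm ι) :=
  Finset.univ.filter fun σ => σ.IsCycle ∧ σ.support = Finset.univ

/-- A family of `n` orthonormal bases of `ℂ^d` is `n`-fold unbiased (an `n`UB) if for every
index tuple `x`, the sum over all `n`-cycles `σ` of the cyclic products of overlaps equals
`(n-1)!/d^(n-1)`. -/
def IsNUB {ι : Type} [Fintype ι] [DecidableEq ι] {d : ℕ}
    (B : ι → OrthonormalBasis (Fin d) ℂ (EuclideanSpace ℂ (Fin d))) : Prop :=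
  ∀ x : ι → Fin d,
    (∑ σ ∈ nCycles ι, ∏ y, ⟪B y (x y), B (σ y) (x (σ y))⟫_ℂ)
      = ((Fintype.card ι - 1).factorial : ℂ) / (d : ℂ) ^ (Fintype.card ι - 1)

/-! Sum the `n`-fold identity over the index `x k` of the omitted basis. By completeness of
that basis, `∑ⱼ ⟪a, B k j⟫ ⟪B k j, b⟫ = ⟪a, b⟫`, so the term of an `n`-cycle `σ` becomes the
term of the `(n-1)`-cycle obtained by cutting `k` out of `σ`. Each `(n-1)`-cycle arises in this
way from exactly `n - 1` of the `n`-cycles (one for each place to put `k` back), so the sum `S`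
over `(n-1)`-cycles satisfies `(n-1) S = d (n-1)!/d^(n-1)`, i.e. `S = (n-2)!/d^(n-2)`. -/

open Equiv Equiv.Perm Finset

lemma mem_nCycles_iff_exists_sameCycle {ι : Type} [Fintype ι] [DecidableEq ι] {σ : Perm ι} :
    σ ∈ nCycles ι ↔ ∃ q, σ q ≠ q ∧ ∀ y, σ.SameCycle q y := by
  simp only [nCycles, mem_filter, mem_univ, true_and]
  constructor
  · rintro ⟨⟨q, hq, hcyc⟩, hsupp⟩
    have hfix : ∀ y, σ y ≠ y := fun y => mem_support.mp (hsupp ▸ mem_univ y)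
    exact ⟨q, hq, fun y => hcyc (hfix y)⟩
  · rintro ⟨q, hq, hq_same⟩
    refine ⟨⟨q, hq, fun y _ => hq_same y⟩, eq_univ_of_forall fun y => ?_⟩
    exact mem_support.mpr fun hy => hq (((hq_same y).apply_eq_self_iff).mpr hy)

section PointDeletion

variable {α : Type} [DecidableEq α] (k : α)

lemma swap_mul_apply_eq_self (σ : Perm α) : (swap k (σ k) * σ) k = k := by
  simp

/-- `removePoint k σ` cuts `k` out of the cycles of `σ` (so `σ⁻¹ k ↦ σ k`), and
`insertPoint k τ q` inserts `k` into the cycles of `τ` just before `q`. -/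
def removePoint (σ : Perm α) : Perm {y // y ≠ k} :=
  (swap k (σ k) * σ).subtypePerm fun _ =>
    ((swap k (σ k) * σ).injective.eq_iff' (swap_mul_apply_eq_self k σ)).not

def insertPoint (τ : Perm {y // y ≠ k}) (q : {y // y ≠ k}) : Perm α :=
  swap k q * ofSubtype τ

lemma ofSubtype_removePoint (σ : Perm α) : ofSubtype (removePoint k σ) = swap k (σ k) * σ :=
  ofSubtype_subtypePerm _ fun y hy => by
    rintro rfl
    exact hy (swap_mul_apply_eq_self y σ)

lemma insertPoint_apply_self (τ : Perm {y // y ≠ k}) (q : {y // y ≠ k}) :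
    insertPoint k τ q k = q := by
  simp [insertPoint, ofSubtype_apply_of_not_mem τ (not_not.mpr rfl)]

lemma removePoint_insertPoint (τ : Perm {y // y ≠ k}) (q : {y // y ≠ k}) :
    removePoint k (insertPoint k τ q) = τ := by
  apply ofSubtype_injective
  rw [ofSubtype_removePoint, insertPoint_apply_self, insertPoint, swap_mul_self_mul]

lemma insertPoint_removePoint (σ : Perm α) (hσ : σ k ≠ k) :
    insertPoint k (removePoint k σ) ⟨σ k, hσ⟩ = σ := by
  rw [insertPoint, ofSubtype_removePoint, swap_mul_self_mul]

variable [Fintype α]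

lemma Equiv.Perm.SameCycle.swap_mul_of_apply_eq_self {f : Perm α} (hk : f k = k) (q : α)
    {a b : α} (h : f.SameCycle a b) : (swap k q * f).SameCycle a b := by
  set g := swap k q * f
  have step : ∀ z, g.SameCycle z (f z) := by
    intro z
    by_cases hzq : f z = q
    · -- `g` reaches `f z = q` in two steps, through `k`
      refine ⟨2, ?_⟩
      simp [g, pow_two, hzq, hk]
    by_cases hzk : z = k
    · rw [hzk, hk]
    have hfzk : f z ≠ k := fun h => hzk (f.injective (h.trans hk.symm))
    exact ⟨1, by simp [g, swap_apply_of_ne_of_ne hfzk hzq]⟩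
  obtain ⟨i, -, rfl⟩ := h.exists_pow_eq'
  clear h
  induction i with
  | zero => rfl
  | succ i ih => rw [pow_succ', mul_apply]; exact ih.trans (step _)

lemma insertPoint_mem_nCycles {τ : Perm {y // y ≠ k}} (hτ : τ ∈ nCycles {y // y ≠ k})
    (q : {y // y ≠ k}) : insertPoint k τ q ∈ nCycles α := by
  obtain ⟨r, -, hr⟩ := mem_nCycles_iff_exists_sameCycle.mp hτ
  have hk : ofSubtype τ k = k := ofSubtype_apply_of_not_mem τ (not_not.mpr rfl)
  have hkq : (insertPoint k τ q).SameCycle k q := by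
    simpa [insertPoint_apply_self] using (SameCycle.refl (insertPoint k τ q) k).apply_right
  refine mem_nCycles_iff_exists_sameCycle.mpr ⟨k, ?_, fun y => ?_⟩
  · rw [insertPoint_apply_self]
    exact q.2
  by_cases hyk : y = k
  · rw [hyk]
  have hτqy : τ.SameCycle q ⟨y, hyk⟩ := (hr q).symm.trans (hr _)
  rw [← subtypePerm_ofSubtype τ, sameCycle_subtypePerm] at hτqy
  exact hkq.trans (hτqy.swap_mul_of_apply_eq_self k hk q)

lemma removePoint_mem_nCycles (hα : 3 ≤ Fintype.card α) {σ : Perm α} (hσ : σ ∈ nCycles α) :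
    removePoint k σ ∈ nCycles {y // y ≠ k} := by
  simp only [nCycles, mem_filter, mem_univ, true_and] at hσ
  obtain ⟨hcyc, hsupp⟩ := hσ
  have hfix : ∀ y, σ y ≠ y := fun y => mem_support.mp (hsupp ▸ mem_univ y)
  have hσσk : σ (σ k) ≠ k := by
    intro h
    have h2 := card_support_swap (hfix k).symm
    rw [← hcyc.eq_swap_of_apply_apply_eq_self (hfix k) h, hsupp, card_univ] at h2
    omega
  have hf := hcyc.swap_mul (hfix k) hσσk
  have hf_ne : ∀ y, y ≠ k → (swap k (σ k) * σ) y ≠ y := by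
    intro y hy
    rw [← mem_support, support_swap_mul_eq σ k hσσk, hsupp]
    simpa using hy
  refine mem_nCycles_iff_exists_sameCycle.mpr ⟨⟨σ k, hfix k⟩, fun h => ?_, fun y => ?_⟩
  · exact hf_ne _ (hfix k) (congrArg Subtype.val h)
  · exact sameCycle_subtypePerm.mpr (hf.sameCycle (hf_ne _ (hfix k)) (hf_ne y y.2))

end PointDeletion

noncomputable def cyclicOverlap {ι : Type} [Fintype ι] {d : ℕ}
    (B : ι → OrthonormalBasis (Fin d) ℂ (EuclideanSpace ℂ (Fin d))) (x : ι → Fin d)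
    (σ : Perm ι) : ℂ :=
  ∏ y, ⟪B y (x y), B (σ y) (x (σ y))⟫_ℂ

section Overlap

variable {α : Type} [Fintype α] [DecidableEq α] {d : ℕ}
  (B : α → OrthonormalBasis (Fin d) ℂ (EuclideanSpace ℂ (Fin d))) (x : α → Fin d) (k : α)

lemma cyclicOverlap_ofSubtype (τ : Perm {y // y ≠ k}) :
    cyclicOverlap B x (ofSubtype τ)
      = cyclicOverlap (fun y : {y // y ≠ k} => B y) (fun y => x y) τ := by
  have hk : ofSubtype τ k = k := ofSubtype_apply_of_not_mem τ (not_not.mpr rfl)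
  rw [cyclicOverlap, Fintype.prod_eq_mul_prod_subtype_ne _ k, hk, OrthonormalBasis.inner_eq_one,
    one_mul, cyclicOverlap]
  simp only [ofSubtype_apply_coe]

lemma sum_cyclicOverlap_update {σ : Perm α} (hσ : σ k ≠ k) :
    ∑ j, cyclicOverlap B (Function.update x k j) σ = cyclicOverlap B x (swap k (σ k) * σ) := by
  obtain ⟨p, hσp⟩ := σ.surjective k
  have hpk : p ≠ k := fun h => hσ (h ▸ hσp)
  have split : ∀ F : α → ℂ, ∏ y, F y = F k * F p * ∏ y ∈ (univ.erase k).erase p, F y := by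
    intro F
    rw [← mul_prod_erase univ F (mem_univ k),
      ← mul_prod_erase _ F (mem_erase.mpr ⟨hpk, mem_univ p⟩), mul_assoc]
  set R := ∏ y ∈ (univ.erase k).erase p, ⟪B y (x y), B (σ y) (x (σ y))⟫_ℂ
  have hrest : ∀ y ∈ (univ.erase k).erase p, σ y ≠ k ∧ σ y ≠ σ k ∧ y ≠ k := by
    intro y hy
    obtain ⟨hyp, hyk, -⟩ := by simpa only [mem_erase] using hy
    exact ⟨fun h => hyp (σ.injective (h.trans hσp.symm)), fun h => hyk (σ.injective h), hyk⟩
  calc ∑ j, cyclicOverlap B (Function.update x k j) σ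
      = ∑ j, ⟪B p (x p), B k j⟫_ℂ * ⟪B k j, B (σ k) (x (σ k))⟫_ℂ * R := by
        refine sum_congr rfl fun j _ => ?_
        rw [cyclicOverlap, split, hσp]
        simp only [Function.update_self, Function.update_of_ne hσ, Function.update_of_ne hpk]
        rw [mul_comm (⟪B k j, _⟫_ℂ)]
        congr 1
        refine prod_congr rfl fun y hy => ?_
        obtain ⟨h1, -, h3⟩ := hrest y hy
        rw [Function.update_of_ne h1, Function.update_of_ne h3]
    _ = ⟪B p (x p), B (σ k) (x (σ k))⟫_ℂ * R := by
        rw [← sum_mul, OrthonormalBasis.sum_inner_mul_inner]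
    _ = cyclicOverlap B x (swap k (σ k) * σ) := by
        rw [cyclicOverlap, split]
        simp only [mul_apply, hσp, swap_apply_left, swap_apply_right, OrthonormalBasis.inner_eq_one,
          one_mul]
        congr 1
        refine prod_congr rfl fun y hy => ?_
        obtain ⟨h1, h2, -⟩ := hrest y hy
        rw [swap_apply_of_ne_of_ne h1 h2]

end Overlap

lemma sum_nCycles_sum_cyclicOverlap_update {α : Type} [Fintype α] [DecidableEq α] {d : ℕ}
    (B : α → OrthonormalBasis (Fin d) ℂ (EuclideanSpace ℂ (Fin d))) (x : α → Fin d) (k : α)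
    (hα : 3 ≤ Fintype.card α) :
    ∑ σ ∈ nCycles α, ∑ j, cyclicOverlap B (Function.update x k j) σ
      = ((Fintype.card α - 1 : ℕ) : ℂ) * ∑ τ ∈ nCycles {y // y ≠ k},
          cyclicOverlap (fun y : {y // y ≠ k} => B y) (fun y => x y) τ := by
  have hfix : ∀ σ ∈ nCycles α, σ k ≠ k := fun σ hσ => by
    obtain ⟨q, hq, hq_same⟩ := mem_nCycles_iff_exists_sameCycle.mp hσ
    exact fun h => hq ((hq_same k).apply_eq_self_iff.mpr h)
  calc ∑ σ ∈ nCycles α, ∑ j, cyclicOverlap B (Function.update x k j) σ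
      = ∑ σ ∈ nCycles α, cyclicOverlap B x (ofSubtype (removePoint k σ)) :=
        sum_congr rfl fun σ hσ => by
          rw [sum_cyclicOverlap_update B x k (hfix σ hσ), ofSubtype_removePoint]
    _ = ∑ τq ∈ nCycles {y // y ≠ k} ×ˢ univ, cyclicOverlap B x (ofSubtype τq.1) := by
        refine sum_bij' (fun σ hσ => (removePoint k σ, ⟨σ k, hfix σ hσ⟩))
          (fun τq _ => insertPoint k τq.1 τq.2) (fun σ hσ => ?_) (fun τq hτq => ?_)
          (fun σ hσ => insertPoint_removePoint k σ (hfix σ hσ)) (fun τq _ => ?_) (fun _ _ => rfl)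
        · exact mem_product.mpr ⟨removePoint_mem_nCycles k hα hσ, mem_univ _⟩
        · exact insertPoint_mem_nCycles k (mem_product.mp hτq).1 τq.2
        · exact Prod.ext (removePoint_insertPoint k τq.1 τq.2)
            (Subtype.ext (insertPoint_apply_self k τq.1 τq.2))
    _ = _ := by
        rw [sum_product, mul_sum]
        refine sum_congr rfl fun τ _ => ?_
        dsimp only
        rw [sum_const, card_univ, Fintype.card_subtype_compl, Fintype.card_subtype_eq,
          cyclicOverlap_ofSubtype, nsmul_eq_mul]

theorem IsNUB.sum_nCycles_subtype_ne {ι : Type} [Fintype ι] [DecidableEq ι] {d : ℕ}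
    {B : ι → OrthonormalBasis (Fin d) ℂ (EuclideanSpace ℂ (Fin d))} (hB : IsNUB B)
    (hι : 3 ≤ Fintype.card ι) (k : ι) (x : ι → Fin d) :
    ∑ τ ∈ nCycles {y // y ≠ k}, cyclicOverlap (fun y : {y // y ≠ k} => B y) (fun y => x y) τ
      = ((Fintype.card ι - 2).factorial : ℂ) / (d : ℂ) ^ (Fintype.card ι - 2) := by
  have hd : (d : ℂ) ≠ 0 := Nat.cast_ne_zero.mpr (x k).pos.ne'
  have hnub : ∀ j, ∑ σ ∈ nCycles ι, cyclicOverlap B (Function.update x k j) σ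
      = ((Fintype.card ι - 1).factorial : ℂ) / (d : ℂ) ^ (Fintype.card ι - 1) := fun j => hB _
  have key := sum_nCycles_sum_cyclicOverlap_update B x k hι
  rw [sum_comm, sum_congr rfl fun j _ => hnub j, sum_const, card_univ, Fintype.card_fin,
    nsmul_eq_mul, show Fintype.card ι - 1 = Fintype.card ι - 2 + 1 by omega] at key
  generalize Fintype.card ι - 2 = m at key ⊢
  rw [Nat.factorial_succ, pow_succ] at key
  push_cast at key
  have hm : (m : ℂ) + 1 ≠ 0 := Nat.cast_add_one_ne_zero m
  field_simp at key ⊢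
  exact key.symm

/-- If `n ≥ 3` orthonormal bases of `ℂ^d` form an `n`UB, then omitting any one basis `k`,
the remaining `n - 1` bases form an `(n-1)`UB: for all index choices, the sum over all
`(n-1)`-cycles on `{1,…,n} \ {k}` of the cyclic overlap products equals `(n-2)!/d^(n-2)`. -/
theorem stmt_2 (n d : ℕ) (hn : 3 ≤ n)
    (B : Fin n → OrthonormalBasis (Fin d) ℂ (EuclideanSpace ℂ (Fin d)))
    (hB : IsNUB B) (k : Fin n) (x : Fin n → Fin d) :
    (∑ σ ∈ nCycles {y : Fin n // y ≠ k},
        ∏ y : {y : Fin n // y ≠ k}, ⟪B y.1 (x y.1), B (σ y).1 (x (σ y).1)⟫_ℂ)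
      = ((n - 2).factorial : ℂ) / (d : ℂ) ^ (n - 2) := by
  have h := hB.sum_nCycles_subtype_ne (by rwa [Fintype.card_fin]) k x
  rwa [Fintype.card_fin] at h
end

section
/- Let n ≥ 2 and suppose n orthonormal bases of ℂ^d form an n-fold unbiased set (nUB). Then any two of these bases are mutually unbiased: for any y ≠ z in {1,…,n} and all i, j ∈ [d], |⟨y_i|z_j⟩| = 1/√d. -/
/-!
Pin the indices `i` of basis `y` and `j` of basis `z`, and sum the `n`UB identity over all the
other indices. In the cyclic product of an `n`-cycle, summing over the index of a basis
`a ∉ {y, z}` merges the two overlaps through `a` by completeness,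
`∑ₖ ⟪u, aₖ⟫⟪aₖ, v⟫ = ⟪u, v⟫`, which removes `a` from the cycle. Removing all of them leaves
`⟪yᵢ, zⱼ⟫⟪zⱼ, yᵢ⟫ = |⟪yᵢ, zⱼ⟫|²` for each of the `(n-1)!` cycles, while the right-hand side sums
to `d^(n-2) · (n-1)!/d^(n-1)`; hence `|⟪yᵢ, zⱼ⟫|² = 1/d`.
-/

open scoped InnerProductSpace

open Equiv Equiv.Perm Finset
open Function (Involutive update update_self update_of_ne update_comm)

theorem card_nCycles (ι : Type) [Fintype ι] [DecidableEq ι] (h : 2 ≤ Fintype.card ι) :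
    #(nCycles ι) = (Fintype.card ι - 1).factorial := by
  have hcycleType : nCycles ι = ({g | g.cycleType = {Fintype.card ι}} : Finset (Perm ι)) := by
    ext σ
    simp only [nCycles, mem_filter, mem_univ, true_and]
    constructor
    · rintro ⟨hσ, hsupp⟩
      rw [hσ.cycleType, hsupp, card_univ]
    · intro hσ
      have hcyc : σ.IsCycle := by rw [← card_cycleType_eq_one, hσ, Multiset.card_singleton]
      rw [hcyc.cycleType, Multiset.singleton_inj] at hσ
      exact ⟨hcyc, eq_univ_of_card _ hσ⟩
  rw [hcycleType, card_of_cycleType_singleton h le_rfl, Nat.choose_self, mul_one]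

theorem sum_update_eq_card_smul {α β M : Type*} [Fintype α] [DecidableEq α] [Fintype β]
    [AddCommMonoid M] (a : α) (G : (α → β) → M) :
    ∑ x : α → β, ∑ k : β, G (update x a k) = Fintype.card β • ∑ x : α → β, G x := by
  have hinv : Involutive fun p : (α → β) × β => (update p.1 a p.2, p.1 a) := by
    rintro ⟨x, k⟩
    simp
  calc ∑ x : α → β, ∑ k : β, G (update x a k)
      = ∑ p : (α → β) × β, G (update p.1 a p.2) := (Fintype.sum_prod_type' _).symm
    _ = ∑ p : (α → β) × β, G p.1 := Fintype.sum_bijective _ hinv.bijective _ _ fun _ => rfl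
    _ = ∑ x : α → β, ∑ _k : β, G x := Fintype.sum_prod_type' fun x _ => G x
    _ = Fintype.card β • ∑ x : α → β, G x := by simp [Finset.smul_sum]

section CycleProduct

variable {𝕜 E ι κ : Type*} [RCLike 𝕜] [NormedAddCommGroup E] [InnerProductSpace 𝕜 E]
  [Fintype ι] [DecidableEq ι] [Fintype κ]

noncomputable def cycleProduct (B : ι → OrthonormalBasis κ 𝕜 E) (σ : Perm ι) (x : ι → κ) : 𝕜 :=
  ∏ w, ⟪B w (x w), B (σ w) (x (σ w))⟫_𝕜

theorem cycleProduct_eq_prod_support (B : ι → OrthonormalBasis κ 𝕜 E) (σ : Perm ι)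
    (x : ι → κ) :
    cycleProduct B σ x = ∏ w ∈ σ.support, ⟪B w (x w), B (σ w) (x (σ w))⟫_𝕜 := by
  refine (prod_subset (subset_univ _) fun w _ hw => ?_).symm
  rw [notMem_support.1 hw, inner_self_eq_one_of_norm_eq_one ((B w).norm_eq_one _)]

theorem cycleProduct_of_support_eq_pair (B : ι → OrthonormalBasis κ 𝕜 E) {σ : Perm ι}
    {y z : ι} (hyz : y ≠ z) (hsupp : σ.support = {y, z}) (x : ι → κ) :
    cycleProduct B σ x = ⟪B y (x y), B z (x z)⟫_𝕜 * ⟪B z (x z), B y (x y)⟫_𝕜 := by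
  have hy : y ∈ σ.support := by simp [hsupp]
  have hz : z ∈ σ.support := by simp [hsupp]
  have hσy : σ y = z := by
    have := apply_mem_support.2 hy
    rw [hsupp, mem_insert, mem_singleton] at this
    exact this.resolve_left (mem_support.1 hy)
  have hσz : σ z = y := by
    have := apply_mem_support.2 hz
    rw [hsupp, mem_insert, mem_singleton] at this
    exact this.resolve_right (mem_support.1 hz)
  rw [cycleProduct_eq_prod_support, hsupp, prod_pair hyz, hσy, hσz]

theorem sum_cycleProduct_update (B : ι → OrthonormalBasis κ 𝕜 E) {σ : Perm ι} {a : ι}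
    (ha : σ a ≠ a) (x : ι → κ) :
    ∑ k, cycleProduct B σ (update x a k) = cycleProduct B (swap a (σ a) * σ) x := by
  set b := σ.symm a
  have hσb : σ b = a := σ.apply_symm_apply a
  have hba : b ≠ a := fun h => ha (by rw [← h, hσb, h])
  set R := (univ.erase a).erase b
  have hR : ∀ w ∈ R, w ≠ a ∧ σ w ≠ a ∧ σ w ≠ σ a := by
    intro w hw
    have hwb := (mem_erase.1 hw).1
    have hwa := (mem_erase.1 (mem_erase.1 hw).2).1
    exact ⟨hwa, fun h => hwb (σ.injective (h.trans hσb.symm)), σ.injective.ne hwa⟩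
  have hsplit : ∀ f : ι → 𝕜, ∏ w, f w = f a * (f b * ∏ w ∈ R, f w) := fun f => by
    rw [mul_prod_erase _ _ (mem_erase.2 ⟨hba, mem_univ b⟩), mul_prod_erase _ _ (mem_univ a)]
  have hrest : ∀ k, ∏ w ∈ R, ⟪B w (update x a k w), B (σ w) (update x a k (σ w))⟫_𝕜
      = ∏ w ∈ R, ⟪B w (x w), B ((swap a (σ a) * σ) w) (x ((swap a (σ a) * σ) w))⟫_𝕜 :=
    fun k => prod_congr rfl fun w hw => by
      obtain ⟨hwa, hσwa, hσwσa⟩ := hR w hw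
      rw [mul_apply, swap_apply_of_ne_of_ne hσwa hσwσa, update_of_ne hwa, update_of_ne hσwa]
  simp only [cycleProduct, hsplit, hrest, hσb, update_self, update_of_ne ha, update_of_ne hba,
    mul_apply, swap_apply_left, swap_apply_right,
    inner_self_eq_one_of_norm_eq_one ((B a).norm_eq_one _), one_mul]
  rw [← (B a).sum_inner_mul_inner, sum_mul]
  exact sum_congr rfl fun k _ => by ring

theorem sum_cycleProduct_swap_mul (B : ι → OrthonormalBasis κ 𝕜 E) {σ : Perm ι} {a y z : ι}
    (ha : σ a ≠ a) (hay : a ≠ y) (haz : a ≠ z) (i j : κ) :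
    ∑ x, cycleProduct B (swap a (σ a) * σ) (update (update x y i) z j)
      = Fintype.card κ * ∑ x, cycleProduct B σ (update (update x y i) z j) := by
  have hupd : ∀ (x : ι → κ) (k : κ), update (update (update x y i) z j) a k
      = update (update (update x a k) y i) z j := fun x k => by
    rw [update_comm haz.symm, update_comm hay.symm]
  simp only [← sum_cycleProduct_update B ha, hupd, ← nsmul_eq_mul]
  exact sum_update_eq_card_smul a fun x => cycleProduct B σ (update (update x y i) z j)

theorem Equiv.Perm.IsCycle.apply_apply_ne_self {σ : Perm ι} (hσ : σ.IsCycle)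
    (h3 : 3 ≤ #σ.support) {a : ι} (ha : σ a ≠ a) : σ (σ a) ≠ a := by
  intro h2
  have hsq : σ ^ 2 = 1 := (hσ.pow_eq_one_iff' ha).2 (by rwa [sq, mul_apply])
  have := Nat.le_of_dvd two_pos (hσ.orderOf ▸ orderOf_dvd_of_pow_eq_one hsq)
  omega

/- Stated multiplicatively to avoid truncated subtraction: the sum runs over all `x`, so each
index outside the support of `σ`, as well as the overwritten `x y` and `x z`, contributes a
factor `card κ`. -/
theorem Equiv.Perm.IsCycle.pow_card_support_mul_sum_cycleProduct
    (B : ι → OrthonormalBasis κ 𝕜 E) {σ : Perm ι} (hσ : σ.IsCycle) {y z : ι} (hyz : y ≠ z)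
    (hy : y ∈ σ.support) (hz : z ∈ σ.support) (i j : κ) :
    (Fintype.card κ : 𝕜) ^ #σ.support * ∑ x, cycleProduct B σ (update (update x y i) z j)
      = (Fintype.card κ : 𝕜) ^ (Fintype.card ι + 2)
        * (⟪B y i, B z j⟫_𝕜 * ⟪B z j, B y i⟫_𝕜) := by
  induction hm : #σ.support generalizing σ with
  | zero => simp_all
  | succ m ih =>
    by_cases hex : ∃ a ∈ σ.support, a ≠ y ∧ a ≠ z
    · obtain ⟨a, ha, hay, haz⟩ := hex
      have h3 : 3 ≤ #σ.support := by
        rw [← card_eq_three.2 ⟨a, y, z, hay, haz, hyz, rfl⟩]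
        exact card_le_card (by simp [insert_subset_iff, *])
      rw [mem_support] at ha
      have hffa := hσ.apply_apply_ne_self h3 ha
      have hsupp : (swap a (σ a) * σ).support = σ.support.erase a := by
        rw [support_swap_mul_eq _ _ hffa, sdiff_singleton_eq_erase]
      have hcontr := ih (hσ.swap_mul ha hffa) (by simp [hsupp, hy, hay.symm])
        (by simp [hsupp, hz, haz.symm])
        (by rw [hsupp, card_erase_of_mem (mem_support.2 ha), hm, Nat.add_sub_cancel])
      rw [sum_cycleProduct_swap_mul B ha hay haz] at hcontr
      rw [pow_succ, ← hcontr]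
      ring
    · push Not at hex
      have hsupp : σ.support = {y, z} := by
        refine Subset.antisymm (fun w hw => ?_) (insert_subset hy (singleton_subset_iff.2 hz))
        rw [mem_insert, mem_singleton]
        by_contra! h
        exact h.2 (hex w hw h.1)
      obtain rfl : m = 1 := by rw [hsupp, card_pair hyz] at hm; omega
      simp only [cycleProduct_of_support_eq_pair B hyz hsupp, update_self, update_of_ne hyz,
        sum_const, card_univ, Fintype.card_fun, nsmul_eq_mul]
      push_cast
      ring

end CycleProduct

theorem IsNUB.inner_mul_inner_eq_inv {ι : Type} [Fintype ι] [DecidableEq ι] {d : ℕ}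
    {B : ι → OrthonormalBasis (Fin d) ℂ (EuclideanSpace ℂ (Fin d))} (hB : IsNUB B) {y z : ι}
    (hyz : y ≠ z) (i j : Fin d) :
    ⟪B y i, B z j⟫_ℂ * ⟪B z j, B y i⟫_ℂ = (d : ℂ)⁻¹ := by
  have hN : 2 ≤ Fintype.card ι := Fintype.one_lt_card_iff.2 ⟨y, z, hyz⟩
  have hd : (d : ℂ) ≠ 0 := Nat.cast_ne_zero.2 (Fin.pos i).ne'
  have hcycle : ∀ σ ∈ nCycles ι, ∑ x, cycleProduct B σ (update (update x y i) z j)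
      = (d : ℂ) ^ 2 * (⟪B y i, B z j⟫_ℂ * ⟪B z j, B y i⟫_ℂ) := by
    intro σ hσ
    simp only [nCycles, mem_filter, mem_univ, true_and] at hσ
    have hpow := hσ.1.pow_card_support_mul_sum_cycleProduct B hyz (by simp [hσ.2])
      (by simp [hσ.2]) i j
    rw [hσ.2, card_univ, Fintype.card_fin, pow_add, mul_assoc] at hpow
    exact mul_left_cancel₀ (pow_ne_zero _ hd) hpow
  have hsum : ∑ x : ι → Fin d, ∑ σ ∈ nCycles ι, cycleProduct B σ (update (update x y i) z j)
      = (d : ℂ) ^ Fintype.card ι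
        * ((Fintype.card ι - 1).factorial / (d : ℂ) ^ (Fintype.card ι - 1)) := by
    refine (sum_congr rfl fun x _ => hB _).trans ?_
    rw [sum_const, card_univ, Fintype.card_fun, Fintype.card_fin, nsmul_eq_mul, Nat.cast_pow]
  rw [sum_comm, sum_congr rfl hcycle, sum_const, card_nCycles ι hN, nsmul_eq_mul] at hsum
  obtain ⟨M, hM⟩ : ∃ M, Fintype.card ι = M + 1 := ⟨_, (Nat.sub_add_cancel (by omega)).symm⟩
  rw [hM, Nat.add_sub_cancel] at hsum
  field_simp at hsum
  have hMd : (M.factorial : ℂ) * (d : ℂ) ^ (M + 1) ≠ 0 :=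
    mul_ne_zero (Nat.cast_ne_zero.2 M.factorial_ne_zero) (pow_ne_zero _ hd)
  refine eq_inv_of_mul_eq_one_left (mul_left_cancel₀ hMd ?_)
  linear_combination hsum

theorem stmt_3_general (n d : ℕ)
    (B : Fin n → OrthonormalBasis (Fin d) ℂ (EuclideanSpace ℂ (Fin d)))
    (hB : IsNUB B) (y z : Fin n) (hyz : y ≠ z) (i j : Fin d) :
    ‖⟪B y i, B z j⟫_ℂ‖ = 1 / Real.sqrt d := by
  have hsq : ‖⟪B y i, B z j⟫_ℂ‖ ^ 2 = (d : ℝ)⁻¹ := by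
    have h := congrArg norm (hB.inner_mul_inner_eq_inv hyz i j)
    rwa [norm_mul, norm_inner_symm (B z j), ← sq, norm_inv, Complex.norm_natCast] at h
  rw [one_div, ← Real.sqrt_inv, ← hsq, Real.sqrt_sq (norm_nonneg _)]

/-- If `n ≥ 2` orthonormal bases of `ℂ^d` form an `n`UB, then any two distinct bases among
them are mutually unbiased: all mutual overlaps have modulus `1/√d`. -/
theorem stmt_3 (n d : ℕ) (hn : 2 ≤ n)
    (B : Fin n → OrthonormalBasis (Fin d) ℂ (EuclideanSpace ℂ (Fin d)))
    (hB : IsNUB B) (y z : Fin n) (hyz : y ≠ z) (i j : Fin d) :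
    ‖⟪B y i, B z j⟫_ℂ‖ = 1 / Real.sqrt d :=
  stmt_3_general n d B hB y z hyz i j
end

section
/- Let n ≥ 2, d ≥ 1, and suppose n orthonormal bases {|y_{x_y}⟩}_{x_y=1}^d (y = 1,…,n) of ℂ^d form an n-fold unbiased set (nUB). Then for every x ∈ [d]^n, the Gram determinant det(⟨y_{x_y}|y'_{x_{y'}}⟩)_{y,y'=1}^n equals d(d−1)(d−2)⋯(d−n+1)/d^n; in particular it is independent of x. -/
open scoped InnerProductSpace

/-!
Write `C(U)` for the sum, over the cyclic permutations `σ` of a set `U` of bases, of the cyclic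
products `∏_{y ∈ U} ⟨y_{x_y}|σ(y)_{x_{σ(y)}}⟩`, and `D(S)` for the principal Gram minor on `S`.
Splitting off the cycle through a fixed `z ∈ S` expands
`D(S) = ∑_{z ∈ U ⊆ S} (-1)^(|U|-1) C(U) D(S \ U)`.
The `n`UB condition passes to every nonempty `U`, `C(U) = (|U|-1)!/d^(|U|-1)`, by downward
induction: summing the condition for `U ∪ {z}` over the basis vector chosen in basis `z` and using
`∑ᵢ |zᵢ⟩⟨zᵢ| = 1` cuts `z` out of each cycle, and every cycle of `U` arises `|U|` times.
The expansion then becomes the Chu–Vandermonde identity for falling factorials, which gives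
`D(S) = d(d-1)⋯(d-|S|+1)/d^|S|`.
-/

open Equiv Equiv.Perm Finset

theorem Finset.nontrivial_insert_of_notMem {α : Type*} [DecidableEq α] {U : Finset α} {z : α}
    (hz : z ∉ U) (hU : U.Nonempty) : (insert z U).Nontrivial := by
  obtain ⟨a, ha⟩ := hU
  exact ⟨z, mem_insert_self z U, a, mem_insert_of_mem ha, fun h => hz (h ▸ ha)⟩

section Cycles

variable {α : Type*} [Fintype α] [DecidableEq α]

theorem Equiv.Perm.IsCycle.swap_mul_of_apply_eq_self {τ : Perm α} (hτ : τ.IsCycle) {z b : α}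
    (hz : τ z = z) (hb : τ b ≠ b) : (swap z b * τ).IsCycle := by
  set σ := swap z b * τ
  have hbz : b ≠ z := by rintro rfl; exact hb hz
  have hσz : σ z = b := by simp [σ, hz]
  have hz_b : σ.SameCycle z b := ⟨1, by simp [hσz]⟩
  -- the `σ`-cycle of `z` contains `b = σ z` and is closed under `τ`, as `σ = τ` off `τ⁻¹ b`
  have hclosed (k : ℕ) : σ.SameCycle z ((τ ^ k) b) := by
    induction k with
    | zero => simpa using hz_b
    | succ k ih =>
      rw [pow_succ', mul_apply]
      by_cases hw : τ ((τ ^ k) b) = b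
      · rwa [hw]
      · have hwz : τ ((τ ^ k) b) ≠ z := fun h => mem_support.1
          (apply_mem_support.2 (pow_apply_mem_support.2 (mem_support.2 hb))) (h ▸ hz)
        have : σ ((τ ^ k) b) = τ ((τ ^ k) b) := by
          simp [σ, swap_apply_of_ne_of_ne hwz hw]
        rw [← this]
        exact sameCycle_apply_right.2 ih
  refine ⟨z, by rw [hσz]; exact hbz, fun y hy => ?_⟩
  by_cases hyz : y = z
  · rw [hyz]
  · have hτy : τ y ≠ y := by
      contrapose! hy
      have hyb : y ≠ b := by rintro rfl; exact hb hy
      simp [σ, hy, swap_apply_of_ne_of_ne hyz hyb]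
    obtain ⟨i, -, rfl⟩ := (hτ.sameCycle hb hτy).exists_pow_eq'
    exact hclosed i

theorem Equiv.Perm.support_swap_mul_of_apply_eq_self {τ : Perm α} {z b : α}
    (hz : τ z = z) (hb : τ b ≠ b) : (swap z b * τ).support = insert z τ.support := by
  have hbz : b ≠ z := by rintro rfl; exact hb hz
  have hτb : τ b ≠ z := fun h => hbz (τ.injective (h.trans hz.symm))
  have h := support_swap_mul_eq (swap z b * τ) z
    (by simp [hz, swap_apply_of_ne_of_ne hτb hb, hτb])
  simp only [mul_apply, hz, swap_apply_left, ← mul_assoc, swap_mul_self, one_mul] at h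
  rw [h, sdiff_singleton_eq_erase, insert_erase (mem_support.2 (by simp [hz, hbz]))]

open scoped Classical in
/-- Unlike `IsCycle`, this counts the identity as the cyclic permutation of a singleton. -/
noncomputable def cyclesOn (U : Finset α) : Finset (Perm α) :=
  univ.filter fun σ => σ.IsCycleOn U ∧ σ.support ⊆ U

theorem mem_cyclesOn {U : Finset α} {σ : Perm α} :
    σ ∈ cyclesOn U ↔ σ.IsCycleOn U ∧ σ.support ⊆ U := by
  simp [cyclesOn]

theorem cyclesOn_singleton (a : α) : cyclesOn {a} = {1} := by
  ext σ
  simp only [mem_cyclesOn, coe_singleton, isCycleOn_singleton, mem_singleton]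
  refine ⟨fun ⟨ha, hs⟩ => support_eq_empty_iff.1 (eq_empty_of_forall_notMem fun y hy => ?_),
    by rintro rfl; simp⟩
  exact mem_support.1 hy (by rw [mem_singleton.1 (hs hy)]; exact ha)

theorem mem_cyclesOn_of_nontrivial {U : Finset α} (hU : U.Nontrivial) {σ : Perm α} :
    σ ∈ cyclesOn U ↔ σ.IsCycle ∧ σ.support = U := by
  rw [mem_cyclesOn]
  constructor
  · rintro ⟨hσ, hs⟩
    exact ⟨isCycle_iff_exists_isCycleOn.2 ⟨U, hU, hσ, fun y hy => hs (mem_support.2 hy)⟩,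
      hs.antisymm fun y hy => mem_support.2 (hσ.apply_ne hU hy)⟩
  · rintro ⟨hσ, rfl⟩
    exact ⟨by simpa [coe_support_eq_set_support] using hσ.isCycleOn, subset_rfl⟩

theorem sign_of_mem_cyclesOn_insert {V : Finset α} {z : α} (hz : z ∉ V) {σ : Perm α}
    (hσ : σ ∈ cyclesOn (insert z V)) : sign σ = (-1) ^ #V := by
  rcases V.eq_empty_or_nonempty with rfl | hV
  · rw [insert_empty, cyclesOn_singleton, mem_singleton] at hσ
    simp [hσ]
  · obtain ⟨hc, hs⟩ := (mem_cyclesOn_of_nontrivial (V.nontrivial_insert_of_notMem hz hV)).1 hσ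
    rw [hc.sign, hs, card_insert_of_notMem hz, pow_succ, mul_neg_one, neg_neg]

theorem support_erase_of_mem_cyclesOn_insert {V : Finset α} {z : α} (hz : z ∉ V) {c : Perm α}
    (hc : c ∈ cyclesOn (insert z V)) : c.support.erase z = V := by
  rcases V.eq_empty_or_nonempty with rfl | hV
  · rw [insert_empty, cyclesOn_singleton, mem_singleton] at hc
    simp [hc]
  · rw [((mem_cyclesOn_of_nontrivial (V.nontrivial_insert_of_notMem hz hV)).1 hc).2,
      erase_insert hz]

theorem cycleOf_eq_of_mem_cyclesOn {U : Finset α} {c : Perm α} (hc : c ∈ cyclesOn U) {z : α}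
    (hz : z ∈ U) : c.cycleOf z = c := by
  obtain ⟨hcyc, hs⟩ := mem_cyclesOn.1 hc
  ext y
  by_cases hy : y ∈ U
  · rw [(hcyc.2 hz hy).cycleOf_apply]
  · have : c y = y := notMem_support.1 fun h => hy (hs h)
    rw [cycleOf_apply]
    split_ifs <;> simp [this]

theorem cycleOf_mul_of_mem_cyclesOn {T V : Finset α} {z : α} (hz : z ∉ T) {c σ : Perm α}
    (hc : c ∈ cyclesOn (insert z V)) (hσ : σ.support ⊆ T \ V) : (σ * c).cycleOf z = c := by
  have hTV : Disjoint (T \ V) (insert z V) := disjoint_left.2 fun w hw h =>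
    (mem_insert.1 h).elim (fun h => hz (h ▸ (mem_sdiff.1 hw).1)) (mem_sdiff.1 hw).2
  have hdisj : σ.Disjoint c := disjoint_iff_disjoint_support.2
    (disjoint_of_subset_left hσ (disjoint_of_subset_right (mem_cyclesOn.1 hc).2 hTV))
  rw [hdisj.cycleOf_mul_distrib, cycleOf_eq_of_mem_cyclesOn hc (mem_insert_self z V),
    (cycleOf_eq_one_iff σ).2 (notMem_support.1 fun h => hz (mem_sdiff.1 (hσ h)).1), one_mul]

theorem cycleOf_mem_cyclesOn (σ : Perm α) (z : α) :
    σ.cycleOf z ∈ cyclesOn (insert z ((σ.cycleOf z).support.erase z)) := by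
  rw [mem_cyclesOn]
  by_cases hz : σ z = z
  · rw [(cycleOf_eq_one_iff σ).2 hz]
    simp
  · rw [insert_erase (mem_support.2 (by rwa [cycleOf_apply_self]))]
    exact ⟨by simpa [coe_support_eq_set_support] using (isCycle_cycleOf σ hz).isCycleOn,
      subset_rfl⟩

theorem support_mul_inv_cycleOf_subset (σ : Perm α) (z : α) :
    (σ * (σ.cycleOf z)⁻¹).support ⊆ σ.support \ insert z (σ.cycleOf z).support := by
  set c := σ.cycleOf z
  have hfix : ∀ w ∈ c.support, (σ * c⁻¹) w = w := fun w hw => by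
    have hw' : c⁻¹ w ∈ c.support := by rwa [← support_inv, apply_mem_support, support_inv]
    rw [mul_apply, ← ((mem_support_cycleOf_iff.1 hw').1).cycleOf_apply]
    simp [c]
  intro w hw
  have hwc : w ∉ c.support := fun h => mem_support.1 hw (hfix w h)
  have hσw : σ w ≠ w := by
    have hcw : c⁻¹ w = w := notMem_support.1 (by rwa [support_inv])
    rwa [mem_support, mul_apply, hcw] at hw
  refine mem_sdiff.2 ⟨mem_support.2 hσw, fun h => ?_⟩
  rcases mem_insert.1 h with rfl | h
  · exact hwc (mem_support_cycleOf_iff.2 ⟨SameCycle.refl _ _, mem_support.2 hσw⟩)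
  · exact hwc h

theorem swap_mul_mem_cyclesOn {U : Finset α} {z : α} (hz : z ∉ U) (hU : U.Nonempty)
    {σ : Perm α} (hσ : σ ∈ cyclesOn (insert z U)) : swap z (σ z) * σ ∈ cyclesOn U := by
  obtain ⟨hc, hs⟩ := (mem_cyclesOn_of_nontrivial (U.nontrivial_insert_of_notMem hz hU)).1 hσ
  have hσz : σ z ≠ z := mem_support.1 (hs ▸ mem_insert_self z U)
  by_cases hσσz : σ (σ z) = z
  · have hswap := hc.eq_swap_of_apply_apply_eq_self hσz hσσz
    have hsupp : σ.support = {z, σ z} := by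
      conv_lhs => rw [hswap]
      exact support_swap hσz.symm
    rw [← erase_insert hz, ← hs, hsupp, erase_insert (by simpa using hσz.symm),
      cyclesOn_singleton, mem_singleton, mul_eq_one_iff_inv_eq, swap_inv]
    exact hswap.symm
  · have hc' := hc.swap_mul hσz hσσz
    have hs' : (swap z (σ z) * σ).support = U := by
      rw [support_swap_mul_eq σ z hσσz, hs, sdiff_singleton_eq_erase, erase_insert hz]
    rw [mem_cyclesOn_of_nontrivial
      (one_lt_card_iff_nontrivial.1 (hs' ▸ hc'.two_le_card_support))]
    exact ⟨hc', hs'⟩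

theorem swap_mul_mem_cyclesOn_insert {U : Finset α} {z a : α} (hz : z ∉ U) (ha : a ∈ U)
    {τ : Perm α} (hτ : τ ∈ cyclesOn U) : swap z (τ a) * τ ∈ cyclesOn (insert z U) := by
  rw [mem_cyclesOn_of_nontrivial (U.nontrivial_insert_of_notMem hz ⟨a, ha⟩)]
  rcases U.eq_singleton_or_nontrivial ha with rfl | hU
  · rw [cyclesOn_singleton, mem_singleton] at hτ
    have hza : z ≠ a := fun h => hz (h ▸ mem_singleton_self a)
    subst hτ
    exact ⟨isCycle_swap hza, by simp [support_swap hza]⟩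
  · obtain ⟨hc, hs⟩ := (mem_cyclesOn_of_nontrivial hU).1 hτ
    have hτz : τ z = z := notMem_support.1 (hs ▸ hz)
    have hτa : τ (τ a) ≠ τ a := mem_support.1 (apply_mem_support.2 (hs ▸ ha))
    exact ⟨hc.swap_mul_of_apply_eq_self hτz hτa,
      by rw [support_swap_mul_of_apply_eq_self hτz hτa, hs]⟩

/-- A cyclic permutation `σ` of `insert z U` is recovered from `swap z (σ z) * σ`, which cuts
`z` out of the cycle, together with the point `σ⁻¹ z ∈ U` after which `z` was inserted. -/
theorem sum_cyclesOn_insert_swap_mul {M : Type*} [AddCommMonoid M] {U : Finset α} {z : α}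
    (hz : z ∉ U) (hU : U.Nonempty) (g : Perm α → M) :
    ∑ σ ∈ cyclesOn (insert z U), g (swap z (σ z) * σ) = #U • ∑ τ ∈ cyclesOn U, g τ := by
  rw [← sum_const, ← sum_product']
  refine sum_nbij' (fun σ => (σ⁻¹ z, swap z (σ z) * σ)) (fun p => swap z (p.2 p.1) * p.2)
    (fun σ hσ => ?_) (fun p hp => ?_) (fun σ _ => ?_) (fun p hp => ?_) fun _ _ => rfl
  · have hσz : σ z ≠ z := (mem_cyclesOn.1 hσ).1.apply_ne
      (by exact_mod_cast U.nontrivial_insert_of_notMem hz hU) (mem_insert_self z U)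
    have haz : σ⁻¹ z ≠ z := fun h => hσz (inv_eq_iff_eq.1 h).symm
    have ha : σ⁻¹ z ∈ σ.support :=
      mem_support.2 (by rw [Perm.coe_inv, Equiv.apply_symm_apply]; exact haz.symm)
    exact mem_product.2 ⟨(mem_insert.1 ((mem_cyclesOn.1 hσ).2 ha)).resolve_left haz,
      swap_mul_mem_cyclesOn hz hU hσ⟩
  · obtain ⟨ha, hτ⟩ := mem_product.1 hp
    exact swap_mul_mem_cyclesOn_insert hz ha hτ
  · simp [← mul_assoc]
  · have hτz : p.2 z = z :=
      notMem_support.1 fun h => hz ((mem_cyclesOn.1 (mem_product.1 hp).2).2 h)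
    ext1
    · simp
    · simp [hτz, ← mul_assoc]

end Cycles

section Minors

variable {ι : Type*} [Fintype ι] [DecidableEq ι]

open scoped Classical in
noncomputable def permsSupportedIn (S : Finset ι) : Finset (Perm ι) :=
  univ.filter fun σ => σ.support ⊆ S

theorem mem_permsSupportedIn {S : Finset ι} {σ : Perm ι} :
    σ ∈ permsSupportedIn S ↔ σ.support ⊆ S := by
  simp [permsSupportedIn]

theorem prod_mul_apply_eq_prod_mul_prod {M : Type*} [CommMonoid M] (f : ι → ι → M)
    {U S : Finset ι} (hUS : U ⊆ S) {c σ : Perm ι} (hc : c.support ⊆ U)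
    (hσ : σ.support ⊆ S \ U) :
    ∏ y ∈ S, f y ((σ * c) y) = (∏ y ∈ U, f y (c y)) * ∏ y ∈ S \ U, f y (σ y) := by
  have hσU : ∀ y ∈ U, σ y = y := fun y hy =>
    notMem_support.1 fun h => (mem_sdiff.1 (hσ h)).2 hy
  have hcU : ∀ y ∈ U, c y ∈ U := fun y hy => by
    by_cases h : c y = y
    · rwa [h]
    · exact hc (apply_mem_support.2 (mem_support.2 h))
  rw [← prod_sdiff hUS, mul_comm]
  congr 1
  · exact prod_congr rfl fun y hy => by rw [mul_apply, hσU _ (hcU y hy)]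
  · exact prod_congr rfl fun y hy => by
      rw [mul_apply, notMem_support.1 fun h => (mem_sdiff.1 hy).2 (hc h)]

variable {R : Type*} [CommRing R] (f : ι → ι → R)

noncomputable def cycleSum (U : Finset ι) : R :=
  ∑ σ ∈ cyclesOn U, ∏ y ∈ U, f y (σ y)

/-- The principal minor `det (f y y')_{y, y' ∈ S}`. -/
noncomputable def minorDet (S : Finset ι) : R :=
  ∑ σ ∈ permsSupportedIn S, ((sign σ : ℤ) : R) * ∏ y ∈ S, f y (σ y)

theorem minorDet_empty : minorDet f ∅ = 1 := by
  have : permsSupportedIn (∅ : Finset ι) = {1} := by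
    ext σ
    simp [mem_permsSupportedIn]
  simp [minorDet, this]

theorem minorDet_univ : minorDet f univ = (Matrix.of f).det := by
  rw [← Matrix.det_transpose, Matrix.det_apply']
  simp [minorDet, permsSupportedIn]

theorem neg_one_pow_mul_cycleSum_mul_minorDet {T V : Finset ι} {z : ι} (hz : z ∉ T)
    (hVT : V ⊆ T) :
    (-1) ^ #V * cycleSum f (insert z V) * minorDet f (T \ V) =
      ∑ p ∈ cyclesOn (insert z V) ×ˢ permsSupportedIn (T \ V),
        ((sign (p.2 * p.1) : ℤ) : R) * ∏ y ∈ insert z T, f y ((p.2 * p.1) y) := by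
  have hdiff : insert z T \ insert z V = T \ V := by
    rw [insert_sdiff_insert, sdiff_insert, erase_eq_of_notMem fun h => hz (mem_sdiff.1 h).1]
  simp only [cycleSum, minorDet, sum_mul, mul_sum, sum_product]
  rw [sum_comm]
  refine sum_congr rfl fun c hc => sum_congr rfl fun σ hσ => ?_
  rw [prod_mul_apply_eq_prod_mul_prod f (insert_subset_insert z hVT) (mem_cyclesOn.1 hc).2
      (hdiff ▸ mem_permsSupportedIn.1 hσ), hdiff, Perm.sign_mul,
    sign_of_mem_cyclesOn_insert (fun h => hz (hVT h)) hc]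
  push_cast
  ring

/-- A permutation supported in `insert z T` factors uniquely as its cycle through `z`, a cyclic
permutation of some `insert z V`, times a permutation supported in `T \ V`. -/
theorem minorDet_insert {T : Finset ι} {z : ι} (hz : z ∉ T) :
    minorDet f (insert z T) =
      ∑ V ∈ T.powerset, (-1) ^ #V * cycleSum f (insert z V) * minorDet f (T \ V) := by
  rw [sum_congr rfl fun V hV => neg_one_pow_mul_cycleSum_mul_minorDet f hz (mem_powerset.1 hV),
    sum_sigma']
  refine sum_bij'
    (fun σ _ => ⟨(σ.cycleOf z).support.erase z, (σ.cycleOf z, σ * (σ.cycleOf z)⁻¹)⟩)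
    (fun p _ => p.2.2 * p.2.1) (fun σ hσ => ?_) (fun p hp => ?_) (fun σ _ => ?_)
    (fun p hp => ?_) (fun σ _ => by simp)
  · have hσ := mem_permsSupportedIn.1 hσ
    have hVT : (σ.cycleOf z).support.erase z ⊆ T :=
      (erase_subset_erase z ((support_cycleOf_le σ z).trans hσ)).trans (erase_insert_subset z T)
    refine mem_sigma.2 ⟨mem_powerset.2 hVT, mem_product.2 ⟨cycleOf_mem_cyclesOn σ z, ?_⟩⟩
    refine mem_permsSupportedIn.2 fun w hw => ?_
    obtain ⟨hwσ, hwc⟩ := mem_sdiff.1 (support_mul_inv_cycleOf_subset σ z hw)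
    obtain ⟨hwz, hwc⟩ := not_or.1 (mem_insert.not.1 hwc)
    exact mem_sdiff.2
      ⟨(mem_insert.1 (hσ hwσ)).resolve_left hwz, fun h => hwc (mem_of_mem_erase h)⟩
  · obtain ⟨V, c, σ'⟩ := p
    obtain ⟨hV, hc, hσ'⟩ := mem_sigma.1 hp |>.imp_right mem_product.1
    refine mem_permsSupportedIn.2 ((support_mul_le σ' c).trans (union_subset ?_ ?_))
    · exact (mem_permsSupportedIn.1 hσ').trans (sdiff_subset.trans (subset_insert z T))
    · exact (mem_cyclesOn.1 hc).2.trans (insert_subset_insert z (mem_powerset.1 hV))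
  · exact inv_mul_cancel_right σ _
  · obtain ⟨V, c, σ'⟩ := p
    obtain ⟨hV, hc, hσ'⟩ := mem_sigma.1 hp |>.imp_right mem_product.1
    simp [cycleOf_mul_of_mem_cyclesOn hz hc (mem_permsSupportedIn.1 hσ'),
      support_erase_of_mem_cyclesOn_insert (fun h => hz (mem_powerset.1 hV h)) hc]

end Minors

theorem Nat.cast_descFactorial_succ {R : Type*} [CommRing R] (d m : ℕ) :
    (d.descFactorial (m + 1) : R) = ((d : R) - m) * d.descFactorial m := by
  rcases le_or_gt m d with h | h
  · rw [Nat.descFactorial_succ, Nat.cast_mul, Nat.cast_sub h]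
  · rw [Nat.descFactorial_eq_zero_iff_lt.2 h, Nat.descFactorial_eq_zero_iff_lt.2 (by omega)]
    simp

/-- Chu–Vandermonde `(d - 1)_k = ∑ⱼ C(k, j) (-1)_j (d)_{k-j}` for falling factorials,
multiplied by `d`, with `C(k, j) (-1)_j = (-1)^j (k)_j`. -/
theorem mul_sum_neg_one_pow_mul_descFactorial {R : Type*} [CommRing R] (d k : ℕ) :
    (d : R) * ∑ j ∈ range (k + 1),
        (-1 : R) ^ j * (k.descFactorial j : R) * (d.descFactorial (k - j) : R) =
      d.descFactorial (k + 1) := by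
  induction k with
  | zero => simp
  | succ k ih =>
    have hterm (j : ℕ) : ((-1 : R) ^ (j + 1) * ((k + 1).descFactorial (j + 1) : ℕ) *
          (d.descFactorial (k + 1 - (j + 1)) : ℕ)) =
        -((k : R) + 1) * ((-1) ^ j * k.descFactorial j * d.descFactorial (k - j)) := by
      rw [Nat.succ_descFactorial_succ, Nat.add_sub_add_right]
      push_cast
      ring
    rw [sum_range_succ', sum_congr rfl fun j _ => hterm j, ← mul_sum]
    simp only [pow_zero, Nat.descFactorial_zero, Nat.cast_one, one_mul, Nat.sub_zero]
    have := Nat.cast_descFactorial_succ (R := R) d (k + 1)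
    push_cast at this ⊢
    linear_combination (-(k : R) - 1) * ih - this

theorem sum_choose_smul_descFactorial_div {K : Type*} [Field K] {d : ℕ} (hd : (d : K) ≠ 0)
    (k : ℕ) :
    ∑ j ∈ range (k + 1), k.choose j • ((-1) ^ j * ((j.factorial : K) / (d : K) ^ j) *
        ((d.descFactorial (k - j) : K) / (d : K) ^ (k - j))) =
      (d.descFactorial (k + 1) : K) / (d : K) ^ (k + 1) := by
  rw [← mul_sum_neg_one_pow_mul_descFactorial (R := K) d k, pow_succ', mul_div_mul_left _ _ hd,
    sum_div]
  refine sum_congr rfl fun j hj => ?_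
  have hjk : j ≤ k := Nat.lt_succ_iff.1 (mem_range.1 hj)
  rw [nsmul_eq_mul, Nat.descFactorial_eq_factorial_mul_choose k j, ← Nat.add_sub_cancel' hjk,
    pow_add, Nat.add_sub_cancel_left]
  push_cast
  field_simp

theorem minorDet_eq_descFactorial_div {ι K : Type*} [Fintype ι] [DecidableEq ι] [Field K]
    (f : ι → ι → K) {d : ℕ} (hd : (d : K) ≠ 0) (S : Finset ι)
    (hf : ∀ U ⊆ S, U.Nonempty →
      cycleSum f U = ((#U - 1).factorial : K) / (d : K) ^ (#U - 1)) :
    minorDet f S = (d.descFactorial #S : K) / (d : K) ^ #S := by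
  induction S using Finset.strongInduction with
  | H S ih =>
    rcases S.eq_empty_or_nonempty with rfl | ⟨z, hz⟩
    · simp [minorDet_empty]
    set T := S.erase z
    have hzT : z ∉ T := notMem_erase z S
    have hS : S = insert z T := (insert_erase hz).symm
    have hterm : ∀ V ∈ T.powerset, (-1) ^ #V * cycleSum f (insert z V) * minorDet f (T \ V) =
        (-1) ^ #V * ((#V).factorial / (d : K) ^ #V) *
          ((d.descFactorial (#T - #V) : K) / (d : K) ^ (#T - #V)) := by
      intro V hV
      have hVT := mem_powerset.1 hV
      rw [hf _ (hS ▸ insert_subset_insert z hVT) (insert_nonempty z V),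
        card_insert_of_notMem fun h => hzT (hVT h), Nat.add_sub_cancel,
        ih (T \ V) (sdiff_subset.trans_ssubset (erase_ssubset hz))
          fun U hU => hf U (hU.trans (sdiff_subset.trans (erase_subset z S))),
        card_sdiff_of_subset hVT]
    rw [hS, minorDet_insert f hzT, sum_congr rfl hterm, sum_powerset_apply_card
      (fun j => (-1) ^ j * ((j.factorial : K) / (d : K) ^ j) *
        ((d.descFactorial (#T - j) : K) / (d : K) ^ (#T - j))),
      sum_choose_smul_descFactorial_div hd, card_insert_of_notMem hzT]

section Overlaps

variable {ι κ 𝕜 E : Type*} [RCLike 𝕜] [NormedAddCommGroup E] [InnerProductSpace 𝕜 E]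
  [Fintype κ] (B : ι → OrthonormalBasis κ 𝕜 E) (x : ι → κ)

/-- The overlap `⟨y_{x_y}|y'_{x_{y'}}⟩`. -/
noncomputable def overlap (y y' : ι) : 𝕜 :=
  ⟪B y (x y), B y' (x y')⟫_𝕜

variable [Fintype ι] [DecidableEq ι]

/-- Completeness `∑ᵢ |zᵢ⟩⟨zᵢ| = 1` of the basis `B z` cuts `z` out of the cycle of `σ`. -/
theorem sum_prod_overlap_update {U : Finset ι} {z : ι} (hz : z ∉ U)
    {σ : Perm ι} (hσ : σ.support ⊆ insert z U) (hσz : σ z ≠ z) :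
    ∑ i, ∏ y ∈ insert z U, overlap B (Function.update x z i) y (σ y) =
      ∏ y ∈ U, overlap B x y ((swap z (σ z) * σ) y) := by
  set a := σ⁻¹ z
  have hσa : σ a = z := by simp [a]
  have haz : a ≠ z := fun h => hσz (by rw [← h, hσa, h])
  have ha : a ∈ U :=
    (mem_insert.1 (hσ (mem_support.2 (by rw [hσa]; exact haz.symm)))).resolve_left haz
  have hrest : ∀ y ∈ U.erase a, y ≠ z ∧ σ y ≠ z := fun y hy =>
    ⟨fun h => hz (h ▸ mem_of_mem_erase hy),
      fun h => ne_of_mem_erase hy (σ.injective (h.trans hσa.symm))⟩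
  have hlhs (i : κ) : ∏ y ∈ insert z U, overlap B (Function.update x z i) y (σ y) =
      (⟪B a (x a), B z i⟫_𝕜 * ⟪B z i, B (σ z) (x (σ z))⟫_𝕜) *
        ∏ y ∈ U.erase a, overlap B x y (σ y) := by
    have hU : ∏ y ∈ U.erase a, overlap B (Function.update x z i) y (σ y) =
        ∏ y ∈ U.erase a, overlap B x y (σ y) := prod_congr rfl fun y hy => by
      simp only [overlap, Function.update_of_ne (hrest y hy).1,
        Function.update_of_ne (hrest y hy).2]
    rw [prod_insert hz, ← mul_prod_erase U _ ha, hU]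
    simp only [overlap, hσa, Function.update_self, Function.update_of_ne hσz,
      Function.update_of_ne haz]
    ring
  have hrhs : ∏ y ∈ U, overlap B x y ((swap z (σ z) * σ) y) =
      ⟪B a (x a), B (σ z) (x (σ z))⟫_𝕜 * ∏ y ∈ U.erase a, overlap B x y (σ y) := by
    rw [← mul_prod_erase U _ ha, prod_congr rfl fun y hy => by
      rw [mul_apply, swap_apply_of_ne_of_ne (hrest y hy).2 (σ.injective.ne (hrest y hy).1)]]
    simp [overlap, hσa]
  rw [sum_congr rfl fun i _ => hlhs i, ← sum_mul, (B z).sum_inner_mul_inner, hrhs]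

theorem card_mul_cycleSum_overlap {U : Finset ι} {z : ι} (hz : z ∉ U) (hU : U.Nonempty) :
    (#U : 𝕜) * cycleSum (overlap B x) U =
      ∑ i, cycleSum (overlap B (Function.update x z i)) (insert z U) := by
  calc (#U : 𝕜) * cycleSum (overlap B x) U
      = ∑ σ ∈ cyclesOn (insert z U), ∏ y ∈ U, overlap B x y ((swap z (σ z) * σ) y) := by
        rw [sum_cyclesOn_insert_swap_mul hz hU (fun τ => ∏ y ∈ U, overlap B x y (τ y)),
          nsmul_eq_mul, cycleSum]
    _ = ∑ σ ∈ cyclesOn (insert z U),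
          ∑ i, ∏ y ∈ insert z U, overlap B (Function.update x z i) y (σ y) := by
        refine sum_congr rfl fun σ hσ =>
          (sum_prod_overlap_update B x hz (mem_cyclesOn.1 hσ).2 ?_).symm
        exact (mem_cyclesOn.1 hσ).1.apply_ne
          (by exact_mod_cast U.nontrivial_insert_of_notMem hz hU) (mem_insert_self z U)
    _ = ∑ i, cycleSum (overlap B (Function.update x z i)) (insert z U) := sum_comm

end Overlaps

theorem cyclesOn_univ {ι : Type} [Fintype ι] [DecidableEq ι] (hι : 2 ≤ Fintype.card ι) :
    cyclesOn (univ : Finset ι) = nCycles ι := by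
  ext σ
  rw [mem_cyclesOn_of_nontrivial (one_lt_card_iff_nontrivial.1 (by rwa [card_univ]))]
  simp [nCycles]

theorem cycleSum_overlap_of_isNUB {ι : Type} [Fintype ι] [DecidableEq ι] {d : ℕ}
    (hι : 2 ≤ Fintype.card ι) (hd : 1 ≤ d)
    {B : ι → OrthonormalBasis (Fin d) ℂ (EuclideanSpace ℂ (Fin d))} (hB : IsNUB B)
    {U : Finset ι} (hU : U.Nonempty) (x : ι → Fin d) :
    cycleSum (overlap B x) U = ((#U - 1).factorial : ℂ) / (d : ℂ) ^ (#U - 1) := by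
  induction U using Finset.strongDownwardInductionOn (n := Fintype.card ι) generalizing x with
  | H U ih =>
    by_cases hUu : U = univ
    · subst hUu
      rw [cycleSum, cyclesOn_univ hι, card_univ]
      exact hB x
    obtain ⟨z, hz⟩ : ∃ z, z ∉ U := by simpa [eq_univ_iff_forall] using hUu
    have key :
        (#U : ℂ) * cycleSum (overlap B x) U = d * ((#U).factorial / (d : ℂ) ^ #U) := by
      simp [card_mul_cycleSum_overlap B x hz hU,
        ih (card_le_univ _) (ssubset_insert hz) (insert_nonempty z U), card_insert_of_notMem hz]
    have hd0 : (d : ℂ) ≠ 0 := Nat.cast_ne_zero.2 (by omega)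
    obtain ⟨m, hm⟩ : ∃ m, #U = m + 1 := Nat.exists_eq_succ_of_ne_zero hU.card_pos.ne'
    rw [hm, Nat.factorial_succ, pow_succ'] at key
    rw [hm, Nat.add_sub_cancel]
    refine mul_left_cancel₀ (Nat.cast_ne_zero.2 m.succ_ne_zero) (key.trans ?_)
    push_cast
    field_simp
  | _ => exact card_le_univ U

/-- If `n ≥ 2` orthonormal bases of `ℂ^d` (`d ≥ 1`) form an `n`UB, then for every index
tuple `x` the Gram determinant `det(⟨y_{x_y}|y'_{x_{y'}}⟩)` equals
`d(d−1)⋯(d−n+1)/d^n`; in particular it is independent of `x`. -/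
theorem stmt_7 (n d : ℕ) (hn : 2 ≤ n) (hd : 1 ≤ d)
    (B : Fin n → OrthonormalBasis (Fin d) ℂ (EuclideanSpace ℂ (Fin d)))
    (hB : IsNUB B) (x : Fin n → Fin d) :
    Matrix.det (Matrix.of fun y y' : Fin n => ⟪B y (x y), B y' (x y')⟫_ℂ)
      = (d.descFactorial n : ℂ) / (d : ℂ) ^ n := by
  have h := minorDet_eq_descFactorial_div (overlap B x) (Nat.cast_ne_zero.2 (by omega)) univ
    fun U _ hU => cycleSum_overlap_of_isNUB (by simpa using hn) hd hB hU x
  rw [minorDet_univ, card_univ, Fintype.card_fin] at h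
  exact h
end

section
/- Let d ≥ 1 and suppose there exist d+1 orthonormal bases of ℂ^d such that every subset of d of them forms a d-fold unbiased set (dUB). Then all d+1 bases together form a (d+1)-fold unbiased set: for all x_1,…,x_{d+1} ∈ [d], ∑_{σ ∈ S_{d+1}, σ a (d+1)-cycle} ∏_{y=1}^{d+1} ⟨y_{x_y}|σ(y)_{x_{σ(y)}}⟩ = d!/d^d. -/
open scoped InnerProductSpace

namespace NUBAux
open Finset Equiv Equiv.Perm

variable {ι : Type} [Fintype ι] [DecidableEq ι]

open scoped Classical in
noncomputable def cycSum (G : ι → ι → ℂ) (S : Finset ι) : ℂ :=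
  ∑ σ ∈ Finset.univ.filter (fun σ : Perm ι => σ.IsCycle ∧ σ.support = S), ∏ y ∈ S, G y (σ y)

open scoped Classical in
noncomputable def permSum (G : ι → ι → ℂ) (S : Finset ι) : ℂ :=
  ∑ σ ∈ Finset.univ.filter (fun σ : Perm ι => σ.support ⊆ S),
    ((Perm.sign σ : ℤ) : ℂ) * ∏ y ∈ S, G y (σ y)

theorem prodG_congr {G : ι → ι → ℂ} (hG : ∀ y, G y y = 1) {σ : Perm ι} {S T : Finset ι}
    (h1 : σ.support ⊆ S) (h2 : S ⊆ T) :
    ∏ y ∈ T, G y (σ y) = ∏ y ∈ S, G y (σ y) := by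
  rw [← Finset.prod_sdiff h2]
  have : ∀ y ∈ T \ S, G y (σ y) = 1 := by
    intro y hy
    rw [Finset.mem_sdiff] at hy
    have : σ y = y := by
      by_contra hne
      exact hy.2 (h1 (Equiv.Perm.mem_support.2 hne))
    rw [this, hG]
  rw [Finset.prod_congr rfl this]
  simp

theorem permSum_empty (G : ι → ι → ℂ) : permSum G (∅ : Finset ι) = 1 := by
  classical
  rw [permSum]
  have : (Finset.univ.filter (fun σ : Perm ι => σ.support ⊆ (∅ : Finset ι))) = {1} := by
    ext σ
    simp [Finset.subset_empty, Equiv.Perm.support_eq_empty_iff]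
  rw [this]
  simp

theorem cycSum_eq_zero {G : ι → ι → ℂ} {S : Finset ι} (h : S.card < 2) : cycSum G S = 0 := by
  classical
  rw [cycSum]
  apply Finset.sum_eq_zero
  intro σ hσ
  rw [Finset.mem_filter] at hσ
  exfalso
  have := hσ.2.1.two_le_card_support
  rw [hσ.2.2] at this
  omega

theorem permSum_recurrence {G : ι → ι → ℂ} (hG : ∀ y, G y y = 1) {S : Finset ι} {y₀ : ι}
    (hy₀ : y₀ ∈ S) :
    permSum G S = permSum G (S.erase y₀)
      + ∑ b ∈ S.powerset.filter (fun b => y₀ ∈ b),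
          (-1 : ℂ) ^ (b.card - 1) * cycSum G b * permSum G (S \ b) := by
  classical
  rw [permSum,
    ← Finset.sum_filter_add_sum_filter_not _ (fun σ : Perm ι => σ y₀ = y₀)]
  congr 1
  · -- fixed-point part
    rw [Finset.filter_filter]
    rw [permSum]
    apply Finset.sum_congr
    · ext σ
      simp only [Finset.mem_filter, Finset.mem_univ, true_and, Finset.subset_erase]
      constructor
      · rintro ⟨h1, h2⟩
        exact ⟨h1, fun hc => (Equiv.Perm.mem_support.1 hc) h2⟩
      · rintro ⟨h1, h2⟩
        refine ⟨h1, ?_⟩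
        by_contra hne
        exact h2 (Equiv.Perm.mem_support.2 hne)
    · intro σ hσ
      rw [Finset.mem_filter] at hσ
      rw [prodG_congr hG hσ.2 (Finset.erase_subset _ _)]
  · -- moving part
    set C : Finset (Perm ι) :=
      Finset.univ.filter (fun c : Perm ι => c.IsCycle ∧ y₀ ∈ c.support ∧ c.support ⊆ S) with hC
    set P : Finset (Perm ι × Perm ι) :=
      (Finset.univ ×ˢ Finset.univ).filter
        (fun p : Perm ι × Perm ι => (p.1.IsCycle ∧ y₀ ∈ p.1.support ∧ p.1.support ⊆ S)
          ∧ p.2.support ⊆ S \ p.1.support) with hP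
    have step1 :
        ∑ σ ∈ (Finset.univ.filter (fun σ : Perm ι => σ.support ⊆ S)).filter
            (fun σ => ¬ σ y₀ = y₀),
          ((Perm.sign σ : ℤ) : ℂ) * ∏ y ∈ S, G y (σ y)
        = ∑ p ∈ P, ((Perm.sign (p.2 * p.1) : ℤ) : ℂ) * ∏ y ∈ S, G y ((p.2 * p.1) y) := by
      apply Finset.sum_nbij' (fun σ => (σ.cycleOf y₀, σ * (σ.cycleOf y₀)⁻¹))
        (fun p => p.2 * p.1)
      · intro σ hσ
        rw [Finset.mem_filter, Finset.mem_filter] at hσ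
        obtain ⟨⟨-, hsupp⟩, hmove⟩ := hσ
        have hy : σ y₀ ≠ y₀ := hmove
        have hy' : y₀ ∈ σ.support := Equiv.Perm.mem_support.2 hy
        have hcyc : (σ.cycleOf y₀).IsCycle := Equiv.Perm.isCycle_cycleOf σ hy
        have hymem : y₀ ∈ (σ.cycleOf y₀).support :=
          Equiv.Perm.mem_support_cycleOf_iff.2 ⟨Equiv.Perm.SameCycle.refl _ _, hy'⟩
        have hmemfac : σ.cycleOf y₀ ∈ σ.cycleFactorsFinset :=
          Equiv.Perm.cycleOf_mem_cycleFactorsFinset_iff.2 hy'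
        have hdisj : Equiv.Perm.Disjoint (σ * (σ.cycleOf y₀)⁻¹) (σ.cycleOf y₀) :=
          Equiv.Perm.disjoint_mul_inv_of_mem_cycleFactorsFinset hmemfac
        have hsuppmul : (σ * (σ.cycleOf y₀)⁻¹).support ∪ (σ.cycleOf y₀).support = σ.support := by
          rw [← hdisj.support_mul, inv_mul_cancel_right]
        have hdisjsupp := Equiv.Perm.disjoint_iff_disjoint_support.1 hdisj
        rw [hP, Finset.mem_filter]
        refine ⟨Finset.mem_product.2 ⟨Finset.mem_univ _, Finset.mem_univ _⟩,
          ⟨hcyc, hymem, (Equiv.Perm.support_cycleOf_le σ y₀).trans hsupp⟩, ?_⟩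
        intro z hz
        rw [Finset.mem_sdiff]
        refine ⟨hsupp ?_, fun hz2 => ?_⟩
        · rw [← hsuppmul]; exact Finset.mem_union_left _ hz
        · exact (Finset.disjoint_left.1 hdisjsupp) hz hz2
      · intro p hp
        rw [hP, Finset.mem_filter] at hp
        obtain ⟨-, ⟨hcyc, hymem, hcsub⟩, hτsub⟩ := hp
        have hcy : p.1 y₀ ∈ p.1.support := Equiv.Perm.apply_mem_support.2 hymem
        have hτfix : p.2 (p.1 y₀) = p.1 y₀ := by
          rw [← Equiv.Perm.notMem_support]
          intro hmem
          exact ((Finset.mem_sdiff.1 (hτsub hmem)).2) hcy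
        rw [Finset.mem_filter, Finset.mem_filter]
        refine ⟨⟨Finset.mem_univ _, ?_⟩, ?_⟩
        · intro z hz
          have := Equiv.Perm.support_mul_le p.2 p.1 hz
          rw [Finset.sup_eq_union, Finset.mem_union] at this
          rcases this with h | h
          · exact (Finset.mem_sdiff.1 (hτsub h)).1
          · exact hcsub h
        · show ¬ (p.2 * p.1) y₀ = y₀
          rw [Equiv.Perm.mul_apply, hτfix]
          exact Equiv.Perm.mem_support.1 hymem
      · intro σ hσ
        simp only [inv_mul_cancel_right]
      · intro p hp
        rw [hP, Finset.mem_filter] at hp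
        obtain ⟨-, ⟨hcyc, hymem, hcsub⟩, hτsub⟩ := hp
        have hdisjsupp : _root_.Disjoint p.1.support p.2.support := by
          rw [Finset.disjoint_left]
          intro z hz1 hz2
          exact (Finset.mem_sdiff.1 (hτsub hz2)).2 hz1
        have hdisj : Equiv.Perm.Disjoint p.1 p.2 :=
          Equiv.Perm.disjoint_iff_disjoint_support.2 hdisjsupp
        have hcomm : p.2 * p.1 = p.1 * p.2 := (hdisj.commute.symm).eq
        have hτy₀ : p.2 y₀ = y₀ := by
          rw [← Equiv.Perm.notMem_support]
          exact fun hmem => (Finset.disjoint_right.1 hdisjsupp) hmem hymem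
        have hcy₀ : p.1 y₀ ≠ y₀ := Equiv.Perm.mem_support.1 hymem
        have hcycleOf : (p.2 * p.1).cycleOf y₀ = p.1 := by
          rw [hcomm, Equiv.Perm.cycleOf_mul_of_apply_right_eq_self hdisj.commute y₀ hτy₀]
          exact hcyc.cycleOf_eq hcy₀
        ext : 1
        · simp only [hcycleOf]
        · simp only [hcycleOf, mul_inv_cancel_right]
      · intro σ hσ
        simp only [inv_mul_cancel_right]
    rw [step1]
    -- now unfold as iterated sum
    have step2 :
        ∑ p ∈ P, ((Perm.sign (p.2 * p.1) : ℤ) : ℂ) * ∏ y ∈ S, G y ((p.2 * p.1) y)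
        = ∑ c ∈ C, ∑ τ ∈ Finset.univ.filter (fun τ : Perm ι => τ.support ⊆ S \ c.support),
            ((Perm.sign (τ * c) : ℤ) : ℂ) * ∏ y ∈ S, G y ((τ * c) y) := by
      apply Finset.sum_finset_product
      intro p
      rw [hP, hC]
      simp only [Finset.mem_filter, Finset.mem_product, Finset.mem_univ, true_and, and_assoc]
      try tauto
    rw [step2]
    -- simplify inner term
    have step3 : ∀ c ∈ C,
        ∑ τ ∈ Finset.univ.filter (fun τ : Perm ι => τ.support ⊆ S \ c.support),
            ((Perm.sign (τ * c) : ℤ) : ℂ) * ∏ y ∈ S, G y ((τ * c) y)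
        = ((Perm.sign c : ℤ) : ℂ) * (∏ y ∈ c.support, G y (c y)) * permSum G (S \ c.support) := by
      intro c hc
      rw [hC, Finset.mem_filter] at hc
      obtain ⟨-, hcyc, hymem, hcsub⟩ := hc
      rw [permSum, Finset.mul_sum]
      apply Finset.sum_congr rfl
      intro τ hτ
      rw [Finset.mem_filter] at hτ
      have hτsub := hτ.2
      have hprod : ∏ y ∈ S, G y ((τ * c) y)
          = (∏ y ∈ c.support, G y (c y)) * ∏ y ∈ S \ c.support, G y (τ y) := by
        rw [← Finset.prod_sdiff hcsub, mul_comm]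
        congr 1
        · apply Finset.prod_congr rfl
          intro y hy
          have hcy : c y ∈ c.support := Equiv.Perm.apply_mem_support.2 hy
          have : τ (c y) = c y := by
            rw [← Equiv.Perm.notMem_support]
            intro hmem
            exact (Finset.mem_sdiff.1 (hτsub hmem)).2 hcy
          rw [Equiv.Perm.mul_apply, this]
        · apply Finset.prod_congr rfl
          intro y hy
          rw [Finset.mem_sdiff] at hy
          have hcy : c y = y := by
            rw [← Equiv.Perm.notMem_support]
            exact hy.2
          rw [Equiv.Perm.mul_apply, hcy]
      rw [hprod, map_mul]
      push_cast
      ring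
    rw [Finset.sum_congr rfl step3]
    -- group by support
    have hmaps : ∀ c ∈ C, c.support ∈ S.powerset.filter (fun b => y₀ ∈ b) := by
      intro c hc
      rw [hC, Finset.mem_filter] at hc
      rw [Finset.mem_filter, Finset.mem_powerset]
      exact ⟨hc.2.2.2, hc.2.2.1⟩
    rw [← Finset.sum_fiberwise_of_maps_to hmaps]
    apply Finset.sum_congr rfl
    intro b hb
    rw [Finset.mem_filter, Finset.mem_powerset] at hb
    obtain ⟨hbS, hy₀b⟩ := hb
    have hfilter : C.filter (fun c : Perm ι => c.support = b)
        = Finset.univ.filter (fun c : Perm ι => c.IsCycle ∧ c.support = b) := by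
      ext c
      rw [hC]
      simp only [Finset.mem_filter, Finset.mem_univ, true_and]
      constructor
      · rintro ⟨⟨h1, h2, h3⟩, h4⟩; exact ⟨h1, h4⟩
      · rintro ⟨h1, h2⟩
        refine ⟨⟨h1, ?_, ?_⟩, h2⟩ <;> rw [h2]
        · exact hy₀b
        · exact hbS
    rw [hfilter, cycSum, Finset.mul_sum, Finset.sum_mul]
    apply Finset.sum_congr rfl
    intro c hc
    rw [Finset.mem_filter] at hc
    obtain ⟨-, hcyc, hsupp⟩ := hc
    have hcard : 2 ≤ b.card := by
      rw [← hsupp]; exact hcyc.two_le_card_support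
    have hsign : ((Perm.sign c : ℤ) : ℂ) = (-1 : ℂ) ^ (b.card - 1) := by
      rw [hcyc.sign, hsupp]
      have : b.card = (b.card - 1) + 1 := by omega
      rw [this]
      push_cast
      ring
    rw [hsupp, hsign]
    try ring

noncomputable def fall (a : ℂ) (n : ℕ) : ℂ := ∏ i ∈ Finset.range n, (a - i)

@[simp] lemma fall_zero (a : ℂ) : fall a 0 = 1 := by simp [fall]

lemma fall_succ (a : ℂ) (n : ℕ) : fall a (n + 1) = fall a n * (a - n) := by
  rw [fall, Finset.prod_range_succ, fall]

lemma fall_succ' (a : ℂ) (n : ℕ) : fall a (n + 1) = a * fall (a - 1) n := by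
  rw [fall, Finset.prod_range_succ']
  have h : ∀ i ∈ Finset.range n, (a - ((i + 1 : ℕ) : ℂ)) = (a - 1 - i) := by
    intro i _
    push_cast
    ring
  rw [Finset.prod_congr rfl h]
  rw [fall]
  push_cast
  ring

lemma keyId (a : ℂ) (N : ℕ) :
    ∑ j ∈ Finset.range (N + 1),
      (-1 : ℂ) ^ j * (N.choose j : ℂ) * (j.factorial : ℂ) * fall a (N - j)
    = fall (a - 1) N := by
  induction N with
  | zero => simp
  | succ N ih =>
    rw [Finset.sum_range_succ']
    have hterm : ∀ i ∈ Finset.range (N + 1),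
        (-1 : ℂ) ^ (i + 1) * ((N + 1).choose (i + 1) : ℂ) * ((i + 1).factorial : ℂ)
          * fall a (N + 1 - (i + 1))
        = (-((N : ℂ) + 1)) * ((-1 : ℂ) ^ i * (N.choose i : ℂ) * (i.factorial : ℂ)
          * fall a (N - i)) := by
      intro i _
      have key : (N + 1).choose (i + 1) * (i + 1) = (N + 1) * N.choose i := by
        simpa [Nat.succ_eq_add_one] using (Nat.add_one_mul_choose_eq N i).symm
      have hcoef : ((N + 1).choose (i + 1) * (i + 1).factorial : ℕ)
          = (N + 1) * (N.choose i * i.factorial) := by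
        rw [Nat.factorial_succ]
        calc (N + 1).choose (i + 1) * ((i + 1) * i.factorial)
            = ((N + 1).choose (i + 1) * (i + 1)) * i.factorial := by ring
          _ = ((N + 1) * N.choose i) * i.factorial := by rw [key]
          _ = (N + 1) * (N.choose i * i.factorial) := by ring
      have h2 : (((N + 1).choose (i + 1) : ℂ)) * (((i + 1).factorial : ℕ) : ℂ)
          = ((N : ℂ) + 1) * ((N.choose i : ℂ) * ((i.factorial : ℕ) : ℂ)) := by
        exact_mod_cast hcoef
      have h1 : N + 1 - (i + 1) = N - i := by omega
      rw [h1]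
      linear_combination ((-1 : ℂ) ^ (i + 1) * fall a (N - i)) * h2
    rw [Finset.sum_congr rfl hterm, ← Finset.mul_sum, ih]
    simp only [pow_zero, Nat.choose_zero_right, Nat.factorial_zero, Nat.cast_one, one_mul,
      Nat.sub_zero]
    rw [fall_succ', fall_succ]
    push_cast
    ring

noncomputable def tfun (d n c : ℕ) : ℂ :=
  (-1 : ℂ) ^ (c - 1) * (((c - 1).factorial : ℂ) / (d : ℂ) ^ (c - 1))
    * (fall (d : ℂ) (n - c) / (d : ℂ) ^ (n - c))

lemma tfun_one (d n : ℕ) : tfun d n 1 = fall (d : ℂ) (n - 1) / (d : ℂ) ^ (n - 1) := by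
  simp [tfun]

lemma sum_binom_tfun {d : ℕ} (hd : 1 ≤ d) {n : ℕ} (hn : 1 ≤ n) :
    ∑ j ∈ Finset.range n, (((n - 1).choose j : ℕ) : ℂ) * tfun d n (j + 1)
    = fall (d : ℂ) n / (d : ℂ) ^ n := by
  obtain ⟨N, rfl⟩ : ∃ N, n = N + 1 := ⟨n - 1, by omega⟩
  have hd0 : (d : ℂ) ≠ 0 := by
    exact_mod_cast Nat.cast_ne_zero.2 (by omega)
  have hterm : ∀ j ∈ Finset.range (N + 1),
      ((N.choose j : ℕ) : ℂ) * tfun d (N + 1) (j + 1)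
      = ((-1 : ℂ) ^ j * (N.choose j : ℂ) * (j.factorial : ℂ) * fall (d : ℂ) (N - j))
        / (d : ℂ) ^ N := by
    intro j hj
    rw [Finset.mem_range] at hj
    have h1 : j + 1 - 1 = j := by omega
    have h2 : N + 1 - (j + 1) = N - j := by omega
    have h3 : (d : ℂ) ^ j * (d : ℂ) ^ (N - j) = (d : ℂ) ^ N := by
      rw [← pow_add]
      congr 1
      omega
    rw [tfun, h1, h2]
    field_simp
    linear_combination (-((N.choose j : ℂ) * (j.factorial : ℂ) * fall (d : ℂ) (N - j))) * h3
  simp only [Nat.add_sub_cancel]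
  rw [Finset.sum_congr rfl hterm, ← Finset.sum_div, keyId, fall_succ']
  field_simp
  ring

lemma sum_card_powerset_filter {ι : Type} [DecidableEq ι] (S : Finset ι) {y₀ : ι}
    (hy₀ : y₀ ∈ S) (t : ℕ → ℂ) :
    ∑ b ∈ S.powerset.filter (fun b => y₀ ∈ b), t b.card
    = ∑ j ∈ Finset.range S.card, (((S.card - 1).choose j : ℕ) : ℂ) * t (j + 1) := by
  have h1 : ∑ b ∈ S.powerset.filter (fun b => y₀ ∈ b), t b.card
      = ∑ a ∈ (S.erase y₀).powerset, t (a.card + 1) := by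
    apply Finset.sum_nbij' (fun b => b.erase y₀) (fun a => insert y₀ a)
    · intro b hb
      rw [Finset.mem_filter, Finset.mem_powerset] at hb
      rw [Finset.mem_powerset]
      exact Finset.erase_subset_erase _ hb.1
    · intro a ha
      rw [Finset.mem_powerset] at ha
      rw [Finset.mem_filter, Finset.mem_powerset]
      constructor
      · exact Finset.insert_subset hy₀ (ha.trans (Finset.erase_subset _ _))
      · exact Finset.mem_insert_self _ _
    · intro b hb
      rw [Finset.mem_filter] at hb
      exact Finset.insert_erase hb.2
    · intro a ha
      rw [Finset.mem_powerset] at ha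
      apply Finset.erase_insert
      intro hy
      exact Finset.notMem_erase y₀ S (ha hy)
    · intro b hb
      rw [Finset.mem_filter] at hb
      rw [Finset.card_erase_of_mem hb.2]
      congr 1
      have : 1 ≤ b.card := Finset.card_pos.2 ⟨y₀, hb.2⟩
      omega
  rw [h1, Finset.sum_powerset]
  have hcard : (S.erase y₀).card = S.card - 1 := Finset.card_erase_of_mem hy₀
  have hrange : (S.erase y₀).card + 1 = S.card := by
    have : 1 ≤ S.card := Finset.card_pos.2 ⟨y₀, hy₀⟩
    omega
  rw [hrange]
  apply Finset.sum_congr rfl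
  intro j hj
  have : ∀ a ∈ Finset.powersetCard j (S.erase y₀), t (a.card + 1) = t (j + 1) := by
    intro a ha
    rw [Finset.mem_powersetCard] at ha
    rw [ha.2]
  rw [Finset.sum_congr rfl this, Finset.sum_const, Finset.card_powersetCard, hcard,
    nsmul_eq_mul]

theorem cycSum_singleton_zero (G : ι → ι → ℂ) (y : ι) : cycSum G {y} = 0 :=
  cycSum_eq_zero (by simp)

theorem permSum_value {d : ℕ} {G : ι → ι → ℂ} (hG : ∀ y, G y y = 1)
    (hcyc : ∀ b : Finset ι, 2 ≤ b.card → b.card ≤ d →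
      cycSum G b = ((b.card - 1).factorial : ℂ) / (d : ℂ) ^ (b.card - 1)) :
    ∀ n : ℕ, n ≤ d → ∀ S : Finset ι, S.card = n →
      permSum G S = fall (d : ℂ) n / (d : ℂ) ^ n := by
  intro n
  induction n using Nat.strong_induction_on with
  | _ n ih =>
    intro hn S hS
    rcases Finset.eq_empty_or_nonempty S with rfl | hne
    · rw [Finset.card_empty] at hS
      rw [permSum_empty, ← hS]
      simp
    · obtain ⟨y₀, hy₀⟩ := hne
      have hn1 : 1 ≤ n := by rw [← hS]; exact Finset.card_pos.2 ⟨y₀, hy₀⟩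
      have hd1 : 1 ≤ d := le_trans hn1 hn
      rw [permSum_recurrence hG hy₀]
      have hErase : permSum G (S.erase y₀) = fall (d : ℂ) (n - 1) / (d : ℂ) ^ (n - 1) := by
        apply ih (n - 1) (by omega) (by omega)
        rw [Finset.card_erase_of_mem hy₀, hS]
      have hb : ∀ b ∈ S.powerset.filter (fun b => y₀ ∈ b),
          (-1 : ℂ) ^ (b.card - 1) * cycSum G b * permSum G (S \ b)
          = tfun d n b.card - (if b = ({y₀} : Finset ι) then tfun d n 1 else 0) := by
        intro b hbmem
        rw [Finset.mem_filter, Finset.mem_powerset] at hbmem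
        obtain ⟨hbS, hyb⟩ := hbmem
        have hb1 : 1 ≤ b.card := Finset.card_pos.2 ⟨y₀, hyb⟩
        have hbn : b.card ≤ n := hS ▸ Finset.card_le_card hbS
        have hsd : permSum G (S \ b) = fall (d : ℂ) (n - b.card) / (d : ℂ) ^ (n - b.card) := by
          apply ih (n - b.card) (by omega) (by omega)
          rw [Finset.card_sdiff_of_subset hbS, hS]
        by_cases hsing : b = ({y₀} : Finset ι)
        · subst hsing
          rw [cycSum_singleton_zero, if_pos rfl]
          simp
        · have hb2 : 2 ≤ b.card := by
            rcases Nat.lt_or_ge b.card 2 with hlt | hge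
            · exfalso
              have hcard1 : b.card = 1 := by omega
              obtain ⟨a, ha⟩ := Finset.card_eq_one.1 hcard1
              rw [ha, Finset.mem_singleton] at hyb
              exact hsing (by rw [ha, hyb])
            · exact hge
          rw [hcyc b hb2 (by omega), hsd, if_neg hsing, sub_zero, tfun]
      rw [Finset.sum_congr rfl hb, Finset.sum_sub_distrib]
      have hsingmem : ({y₀} : Finset ι) ∈ S.powerset.filter (fun b => y₀ ∈ b) := by
        rw [Finset.mem_filter, Finset.mem_powerset]
        exact ⟨Finset.singleton_subset_iff.2 hy₀, Finset.mem_singleton_self y₀⟩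
      rw [Finset.sum_ite_eq' (S.powerset.filter (fun b => y₀ ∈ b)) ({y₀} : Finset ι)
        (fun _ => tfun d n 1), if_pos hsingmem, tfun_one]
      rw [sum_card_powerset_filter S hy₀ (tfun d n), hS]
      rw [sum_binom_tfun hd1 hn1, hErase]
      ring

theorem cycSum_univ_eq {d : ℕ} (hd : 1 ≤ d) (hcard : Fintype.card ι = d + 1)
    {G : ι → ι → ℂ} (hG : ∀ y, G y y = 1)
    (hcyc : ∀ b : Finset ι, 2 ≤ b.card → b.card ≤ d →
      cycSum G b = ((b.card - 1).factorial : ℂ) / (d : ℂ) ^ (b.card - 1))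
    (hdet : permSum G Finset.univ = 0) :
    cycSum G Finset.univ = (d.factorial : ℂ) / (d : ℂ) ^ d := by
  classical
  have hne : Nonempty ι := Fintype.card_pos_iff.1 (by omega)
  obtain ⟨y₀⟩ := hne
  have hcuniv : (Finset.univ : Finset ι).card = d + 1 := by rw [Finset.card_univ, hcard]
  rw [permSum_recurrence hG (Finset.mem_univ y₀)] at hdet
  have hErase : permSum G ((Finset.univ : Finset ι).erase y₀)
      = fall (d : ℂ) d / (d : ℂ) ^ d := by
    apply permSum_value hG hcyc d le_rfl
    rw [Finset.card_erase_of_mem (Finset.mem_univ y₀), hcuniv]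
    omega
  have hsing_ne_univ : ({y₀} : Finset ι) ≠ Finset.univ := by
    intro hcontra
    have := hcuniv
    rw [← hcontra, Finset.card_singleton] at this
    omega
  have hb : ∀ b ∈ Finset.univ.powerset.filter (fun b : Finset ι => y₀ ∈ b),
      (-1 : ℂ) ^ (b.card - 1) * cycSum G b * permSum G (Finset.univ \ b)
      = tfun d (d + 1) b.card - (if b = ({y₀} : Finset ι) then tfun d (d + 1) 1 else 0)
        - (if b = (Finset.univ : Finset ι) then tfun d (d + 1) (d + 1) else 0)
        + (if b = (Finset.univ : Finset ι) then (-1 : ℂ) ^ d * cycSum G Finset.univ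
            else 0) := by
    intro b hbmem
    rw [Finset.mem_filter, Finset.mem_powerset] at hbmem
    obtain ⟨hbS, hyb⟩ := hbmem
    have hb1 : 1 ≤ b.card := Finset.card_pos.2 ⟨y₀, hyb⟩
    by_cases hsing : b = ({y₀} : Finset ι)
    · subst hsing
      rw [cycSum_singleton_zero, if_pos rfl, if_neg hsing_ne_univ, if_neg hsing_ne_univ]
      simp
    · by_cases huniv : b = (Finset.univ : Finset ι)
      · subst huniv
        rw [if_neg hsing, if_pos rfl, if_pos rfl, Finset.sdiff_self, permSum_empty, hcuniv]
        simp only [Nat.add_sub_cancel]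
        ring
      · have hblt : b.card < d + 1 := by
          rw [← hcuniv]
          exact Finset.card_lt_card (Finset.ssubset_iff_subset_ne.2 ⟨hbS, huniv⟩)
        have hb2 : 2 ≤ b.card := by
          rcases Nat.lt_or_ge b.card 2 with hlt | hge
          · exfalso
            have hcard1 : b.card = 1 := by omega
            obtain ⟨a, ha⟩ := Finset.card_eq_one.1 hcard1
            rw [ha, Finset.mem_singleton] at hyb
            exact hsing (by rw [ha, hyb])
          · exact hge
        have hsd : permSum G (Finset.univ \ b)
            = fall (d : ℂ) (d + 1 - b.card) / (d : ℂ) ^ (d + 1 - b.card) := by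
          apply permSum_value hG hcyc (d + 1 - b.card) (by omega)
          rw [Finset.card_sdiff_of_subset hbS, hcuniv]
        rw [hcyc b hb2 (by omega), hsd, if_neg hsing, if_neg huniv, if_neg huniv, sub_zero,
          sub_zero, add_zero, tfun]
  rw [Finset.sum_congr rfl hb] at hdet
  rw [Finset.sum_add_distrib, Finset.sum_sub_distrib, Finset.sum_sub_distrib] at hdet
  have hsingmem : ({y₀} : Finset ι) ∈ Finset.univ.powerset.filter
      (fun b : Finset ι => y₀ ∈ b) := by
    rw [Finset.mem_filter, Finset.mem_powerset]
    exact ⟨Finset.subset_univ _, Finset.mem_singleton_self y₀⟩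
  have hunivmem : (Finset.univ : Finset ι) ∈ Finset.univ.powerset.filter
      (fun b : Finset ι => y₀ ∈ b) := by
    rw [Finset.mem_filter, Finset.mem_powerset]
    exact ⟨Finset.subset_univ _, Finset.mem_univ y₀⟩
  rw [Finset.sum_ite_eq' _ ({y₀} : Finset ι) (fun _ => tfun d (d + 1) 1),
    if_pos hsingmem] at hdet
  rw [Finset.sum_ite_eq' _ (Finset.univ : Finset ι) (fun _ => tfun d (d + 1) (d + 1)),
    if_pos hunivmem] at hdet
  rw [Finset.sum_ite_eq' _ (Finset.univ : Finset ι)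
    (fun _ => (-1 : ℂ) ^ d * cycSum G Finset.univ), if_pos hunivmem] at hdet
  rw [sum_card_powerset_filter Finset.univ (Finset.mem_univ y₀) (tfun d (d + 1)),
    hcuniv] at hdet
  have hsumall : ∑ j ∈ Finset.range (d + 1), (((d + 1 - 1).choose j : ℕ) : ℂ)
      * tfun d (d + 1) (j + 1) = 0 := by
    rw [sum_binom_tfun hd (by omega)]
    rw [fall_succ]
    simp
  rw [hsumall] at hdet
  have ht1 : tfun d (d + 1) 1 = fall (d : ℂ) d / (d : ℂ) ^ d := by
    rw [tfun_one]
    simp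
  have htd : tfun d (d + 1) (d + 1) = (-1 : ℂ) ^ d * ((d.factorial : ℂ) / (d : ℂ) ^ d) := by
    rw [tfun]
    simp
  rw [ht1, htd, hErase] at hdet
  have hkey : (-1 : ℂ) ^ d * cycSum G Finset.univ
      = (-1 : ℂ) ^ d * ((d.factorial : ℂ) / (d : ℂ) ^ d) := by
    linear_combination hdet
  have hne1 : ((-1 : ℂ) ^ d) ≠ 0 := pow_ne_zero _ (by norm_num)
  exact mul_left_cancel₀ hne1 hkey

lemma ofSubtype_isCycle {p : ι → Prop} [DecidablePred p] {u : Perm (Subtype p)}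
    (hu : u.IsCycle) : (Equiv.Perm.ofSubtype u).IsCycle := by
  have heq : Equiv.Perm.ofSubtype u = u.extendDomain (Equiv.refl (Subtype p)) := by
    ext a
    by_cases h : p a
    · rw [Equiv.Perm.ofSubtype_apply_of_mem u h, Equiv.Perm.extendDomain_apply_subtype _ _ h]
      simp
    · rw [Equiv.Perm.ofSubtype_apply_of_not_mem u h,
        Equiv.Perm.extendDomain_apply_not_subtype _ _ h]
  rw [heq]
  exact hu.extendDomain _

lemma subtypePerm_isCycle {σ : Perm ι} {p : ι → Prop} [DecidablePred p]
    (hσ : σ.IsCycle) (hmem : ∀ y, p y ↔ p (σ y)) (hsupp : ∀ y, σ y ≠ y → p y) :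
    (σ.subtypePerm (fun y => (hmem y).symm)).IsCycle := by
  obtain ⟨x, hx, hsc⟩ := hσ
  refine ⟨⟨x, hsupp x hx⟩, ?_, ?_⟩
  · intro hcon
    rw [Subtype.ext_iff] at hcon
    exact hx hcon
  · rintro ⟨y, hy⟩ hyne
    have hymove : σ y ≠ y := by
      intro hcon
      apply hyne
      rw [Subtype.ext_iff]
      exact hcon
    obtain ⟨i, hi⟩ := hsc hymove
    refine ⟨i, ?_⟩
    rw [Equiv.Perm.subtypePerm_zpow]
    rw [Subtype.ext_iff]
    exact hi

lemma cycSum_compl_eq {d : ℕ}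
    (B : Fin (d + 1) → OrthonormalBasis (Fin d) ℂ (EuclideanSpace ℂ (Fin d)))
    (k : Fin (d + 1)) (hNUB : IsNUB (fun y : {y : Fin (d + 1) // y ≠ k} => B y.1))
    (x : Fin (d + 1) → Fin d) :
    cycSum (fun y z => ⟪B y (x y), B z (x z)⟫_ℂ)
        (Finset.univ.filter (fun y => y ≠ k))
      = ((d - 1).factorial : ℂ) / (d : ℂ) ^ (d - 1) := by
  classical
  have hcard : Fintype.card {y : Fin (d + 1) // y ≠ k} = d := by
    have h1 := Fintype.card_subtype_compl (fun y : Fin (d + 1) => y = k)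
    have h2 : Fintype.card {y : Fin (d + 1) // y = k} = 1 := Fintype.card_subtype_eq k
    rw [h2, Fintype.card_fin] at h1
    simpa using h1
  have hx := hNUB (fun y => x y.1)
  rw [hcard] at hx
  rw [← hx, cycSum]
  have hiff : ∀ σ : Perm (Fin (d + 1)),
      σ ∈ Finset.univ.filter (fun σ : Perm (Fin (d+1)) =>
        σ.IsCycle ∧ σ.support = Finset.univ.filter (fun y => y ≠ k)) →
      ∀ y : Fin (d + 1), y ≠ k ↔ σ y ≠ k := by
    intro σ hσ y
    rw [Finset.mem_filter] at hσ
    have hσk : σ k = k := by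
      rw [← Equiv.Perm.notMem_support, hσ.2.2, Finset.mem_filter]
      simp
    constructor
    · intro hy hcon
      exact hy (σ.injective (hcon.trans hσk.symm))
    · intro hy hcon
      subst hcon
      exact hy hσk
  apply Finset.sum_bij (fun σ hσ => σ.subtypePerm (fun y => (hiff σ hσ y).symm))
  · intro σ hσ
    have hσ' := hσ
    rw [Finset.mem_filter] at hσ'
    rw [nCycles, Finset.mem_filter]
    refine ⟨Finset.mem_univ _, ?_, ?_⟩
    · apply subtypePerm_isCycle hσ'.2.1 (hiff σ hσ)
      intro y hy
      have : y ∈ σ.support := Equiv.Perm.mem_support.2 hy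
      rw [hσ'.2.2, Finset.mem_filter] at this
      exact this.2
    · ext ⟨y, hy⟩
      simp only [Equiv.Perm.mem_support, Finset.mem_univ, iff_true]
      intro hcon
      rw [Subtype.ext_iff] at hcon
      simp only [Equiv.Perm.subtypePerm_apply] at hcon
      have : y ∈ σ.support := by
        rw [hσ'.2.2, Finset.mem_filter]
        exact ⟨Finset.mem_univ _, hy⟩
      exact (Equiv.Perm.mem_support.1 this) hcon
  · intro σ₁ hσ₁ σ₂ hσ₂ heq
    apply Equiv.ext
    intro y
    by_cases hy : y = k
    · subst hy
      have h1 : σ₁ y = y := by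
        by_contra hcon
        exact (hiff σ₁ hσ₁ y).2 hcon rfl
      have h2 : σ₂ y = y := by
        by_contra hcon
        exact (hiff σ₂ hσ₂ y).2 hcon rfl
      rw [h1, h2]
    · have h3 := congrArg
        (fun u : Perm {y : Fin (d+1) // y ≠ k} => (u ⟨y, hy⟩ : {y : Fin (d+1) // y ≠ k})) heq
      simp only [Equiv.Perm.subtypePerm_apply] at h3
      rw [Subtype.ext_iff] at h3
      simpa using h3
  · intro σ' hσ'
    rw [nCycles, Finset.mem_filter] at hσ'
    refine ⟨Equiv.Perm.ofSubtype σ', ?_, ?_⟩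
    · rw [Finset.mem_filter]
      refine ⟨Finset.mem_univ _, ofSubtype_isCycle hσ'.2.1, ?_⟩
      rw [Equiv.Perm.support_ofSubtype, hσ'.2.2, Finset.univ_map_subtype]
    · exact Equiv.Perm.subtypePerm_ofSubtype σ'
  · intro σ hσ
    rw [Finset.prod_subtype (p := fun y : Fin (d+1) => y ≠ k)
      (Finset.univ.filter (fun y : Fin (d+1) => y ≠ k))
      (fun y => by simp) (fun y => ⟪B y (x y), B (σ y) (x (σ y))⟫_ℂ)]
    apply Finset.prod_congr rfl
    intro a _
    rfl



lemma swap_mul_isCycle_insert {σ : Perm ι} (hσ : σ.IsCycle) {S : Finset ι}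
    (hsupp : σ.support = S) {a k : ι} (ha : a ∈ S) (hk : k ∉ S) :
    (Equiv.swap k (σ a) * σ).IsCycle ∧ (Equiv.swap k (σ a) * σ).support = insert k S := by
  have hak : a ≠ k := fun h => hk (h ▸ ha)
  have hamem : a ∈ σ.support := hsupp ▸ ha
  have ha' : σ a ≠ a := Equiv.Perm.mem_support.1 hamem
  have hσk : σ k = k := by
    rw [← Equiv.Perm.notMem_support, hsupp]; exact hk
  have hσa_mem : σ a ∈ σ.support := Equiv.Perm.apply_mem_support.2 hamem
  have hσa_ne_k : σ a ≠ k := fun h => hk (h ▸ (hsupp ▸ hσa_mem))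
  set τ := Equiv.swap k (σ a) * σ with hτ
  have hτa : τ a = k := by
    rw [hτ, Equiv.Perm.mul_apply, Equiv.swap_apply_right]
  have hτk : τ k = σ a := by
    rw [hτ, Equiv.Perm.mul_apply, hσk, Equiv.swap_apply_left]
  have hτy : ∀ y, y ≠ a → y ≠ k → τ y = σ y := by
    intro y h1 h2
    rw [hτ, Equiv.Perm.mul_apply]
    apply Equiv.swap_apply_of_ne_of_ne
    · intro hcon
      exact h2 (σ.injective (hcon.trans hσk.symm))
    · intro hcon
      exact h1 (σ.injective hcon)
  have hsuppτ : τ.support = insert k S := by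
    ext z
    rw [Equiv.Perm.mem_support, Finset.mem_insert]
    by_cases hza : z = a
    · subst hza
      simp [hτa, Ne.symm hak, ha]
    · by_cases hzk : z = k
      · subst hzk
        simp [hτk, hσa_ne_k]
      · rw [hτy z hza hzk]
        simp only [hzk, false_or]
        rw [← Equiv.Perm.mem_support, hsupp]
  refine ⟨⟨a, ?_, ?_⟩, hsuppτ⟩
  · rw [hτa]; exact Ne.symm hak
  · -- every moved point is on the cycle of a
    have hord : orderOf σ = S.card := by rw [hσ.orderOf, hsupp]
    have hpow_ne : ∀ j, 1 ≤ j → j < orderOf σ → (σ ^ j) a ≠ a := by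
      intro j h1 h2 hcon
      have : σ ^ j = 1 := (hσ.pow_eq_one_iff' ha').2 hcon
      have hdvd := orderOf_dvd_of_pow_eq_one this
      have := Nat.le_of_dvd (by omega) hdvd
      omega
    have hC : ∀ j, 1 ≤ j → j ≤ orderOf σ → (τ ^ (j + 1)) a = (σ ^ j) a := by
      intro j h1 h2
      induction j, h1 using Nat.le_induction with
      | base =>
        rw [pow_succ, pow_one, Equiv.Perm.mul_apply, hτa, hτk, pow_one]
      | succ j hj ihj =>
        have hprev := ihj (by omega)
        rw [pow_succ', Equiv.Perm.mul_apply, hprev]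
        have hne_a : (σ ^ j) a ≠ a := hpow_ne j hj (by omega)
        have hne_k : (σ ^ j) a ≠ k := by
          intro hcon
          apply hk
          rw [← hsupp, ← hcon]
          exact Equiv.Perm.pow_apply_mem_support.2 hamem
        rw [hτy _ hne_a hne_k, ← Equiv.Perm.mul_apply, ← pow_succ']
    intro y hy
    have hymem : y ∈ τ.support := Equiv.Perm.mem_support.2 hy
    rw [hsuppτ, Finset.mem_insert] at hymem
    rcases hymem with rfl | hyS
    · exact ⟨1, by rw [zpow_one]; exact hτa⟩
    · have hymove : σ y ≠ y := Equiv.Perm.mem_support.1 (hsupp ▸ hyS)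
      obtain ⟨i, hilt, hieq⟩ := (hσ.sameCycle ha' hymove).exists_pow_eq'
      rcases Nat.eq_zero_or_pos i with rfl | hipos
      · simp only [pow_zero, Equiv.Perm.one_apply] at hieq
        exact ⟨0, by rw [zpow_zero]; exact congrArg _ hieq⟩
      · refine ⟨(i + 1 : ℕ), ?_⟩
        rw [zpow_natCast, hC i hipos (by omega), hieq]


lemma sum_update_cycSum {d : ℕ}
    (B : Fin (d + 1) → OrthonormalBasis (Fin d) ℂ (EuclideanSpace ℂ (Fin d)))
    (x : Fin (d + 1) → Fin d) {S : Finset (Fin (d + 1))} {k : Fin (d + 1)}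
    (hk : k ∉ S) (hS2 : 2 ≤ S.card) :
    ∑ xk : Fin d, cycSum (fun y z =>
        ⟪B y (Function.update x k xk y), B z (Function.update x k xk z)⟫_ℂ) (insert k S)
    = (S.card : ℂ) * cycSum (fun y z => ⟪B y (x y), B z (x z)⟫_ℂ) S := by
  classical
  simp only [cycSum]
  rw [Finset.sum_comm]
  have hper : ∀ τ : Perm (Fin (d + 1)),
      τ ∈ Finset.univ.filter (fun σ : Perm (Fin (d+1)) =>
        σ.IsCycle ∧ σ.support = insert k S) →
      (∑ xk : Fin d, ∏ y ∈ insert k S,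
          ⟪B y (Function.update x k xk y), B (τ y) (Function.update x k xk (τ y))⟫_ℂ)
      = ∏ y ∈ S, ⟪B y (x y), B ((Equiv.swap k (τ k) * τ) y)
          (x ((Equiv.swap k (τ k) * τ) y))⟫_ℂ := by
    intro τ hτ
    rw [Finset.mem_filter] at hτ
    obtain ⟨-, hτcyc, hτsupp⟩ := hτ
    have hkmem : k ∈ τ.support := by rw [hτsupp]; exact Finset.mem_insert_self _ _
    have hτk_ne : τ k ≠ k := Equiv.Perm.mem_support.1 hkmem
    set a := τ⁻¹ k with hadef
    have hτa : τ a = k := Equiv.apply_symm_apply τ k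
    have ha_ne_k : a ≠ k := by
      intro hcon
      apply hτk_ne
      calc τ k = τ a := by rw [hcon]
        _ = k := hτa
    have ha_mem : a ∈ τ.support := by
      rw [Equiv.Perm.mem_support, hτa]
      exact Ne.symm ha_ne_k
    have haS : a ∈ S := by
      have := ha_mem
      rw [hτsupp, Finset.mem_insert] at this
      exact this.resolve_left ha_ne_k
    have hττk_ne : τ (τ k) ≠ k := by
      intro hcon
      have h2 : (τ ^ 2) k = k := by
        rw [pow_two, Equiv.Perm.mul_apply, hcon]
      have h21 : τ ^ 2 = 1 := (hτcyc.pow_eq_one_iff' hτk_ne).2 h2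
      have hdvd := orderOf_dvd_of_pow_eq_one h21
      have hle := Nat.le_of_dvd (by norm_num) hdvd
      have hord : orderOf τ = S.card + 1 := by
        rw [hτcyc.orderOf, hτsupp, Finset.card_insert_of_notMem hk]
      omega
    set σ := Equiv.swap k (τ k) * τ with hσdef
    have hσk : σ k = k := by
      rw [hσdef, Equiv.Perm.mul_apply, Equiv.swap_apply_right]
    have hσa : σ a = τ k := by
      rw [hσdef, Equiv.Perm.mul_apply, hτa, Equiv.swap_apply_left]
    have hσy : ∀ y, y ≠ a → y ≠ k → σ y = τ y := by
      intro y h1 h2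
      rw [hσdef, Equiv.Perm.mul_apply]
      apply Equiv.swap_apply_of_ne_of_ne
      · intro hcon
        exact h1 (by rw [hadef, ← hcon, Equiv.Perm.inv_def, Equiv.symm_apply_apply])
      · intro hcon
        exact h2 (τ.injective hcon)
    have hτy_ne_k : ∀ y, y ≠ a → τ y ≠ k := by
      intro y h1 hcon
      exact h1 (by rw [hadef, ← hcon, Equiv.Perm.inv_def, Equiv.symm_apply_apply])
    have hprod : ∀ xk : Fin d, (∏ y ∈ insert k S,
        ⟪B y (Function.update x k xk y), B (τ y) (Function.update x k xk (τ y))⟫_ℂ)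
        = (⟪B a (x a), B k xk⟫_ℂ * ⟪B k xk, B (τ k) (x (τ k))⟫_ℂ)
          * ∏ y ∈ S.erase a, ⟪B y (x y), B (σ y) (x (σ y))⟫_ℂ := by
      intro xk
      rw [Finset.prod_insert hk, ← Finset.mul_prod_erase S _ haS]
      have hfk : ⟪B k (Function.update x k xk k), B (τ k) (Function.update x k xk (τ k))⟫_ℂ
          = ⟪B k xk, B (τ k) (x (τ k))⟫_ℂ := by
        rw [Function.update_self, Function.update_of_ne hτk_ne]
      have hfa : ⟪B a (Function.update x k xk a), B (τ a) (Function.update x k xk (τ a))⟫_ℂ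
          = ⟪B a (x a), B k xk⟫_ℂ := by
        rw [Function.update_of_ne ha_ne_k, hτa, Function.update_self]
      have hfy : ∀ y ∈ S.erase a,
          ⟪B y (Function.update x k xk y), B (τ y) (Function.update x k xk (τ y))⟫_ℂ
          = ⟪B y (x y), B (σ y) (x (σ y))⟫_ℂ := by
        intro y hy
        rw [Finset.mem_erase] at hy
        have hy_ne_k : y ≠ k := fun h => hk (h ▸ hy.2)
        rw [Function.update_of_ne hy_ne_k, Function.update_of_ne (hτy_ne_k y hy.1),
          hσy y hy.1 hy_ne_k]
      rw [hfk, hfa, Finset.prod_congr rfl hfy]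
      ring
    rw [Finset.sum_congr rfl (fun xk _ => hprod xk), ← Finset.sum_mul]
    rw [(B k).sum_inner_mul_inner (B a (x a)) (B (τ k) (x (τ k)))]
    rw [← Finset.mul_prod_erase S _ haS, hσa]
  rw [Finset.sum_congr rfl hper]
  -- reindex to pairs (σ, a)
  have hbij : ∑ τ ∈ Finset.univ.filter (fun σ : Perm (Fin (d+1)) =>
        σ.IsCycle ∧ σ.support = insert k S),
      ∏ y ∈ S, ⟪B y (x y), B ((Equiv.swap k (τ k) * τ) y)
          (x ((Equiv.swap k (τ k) * τ) y))⟫_ℂ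
      = ∑ p ∈ (Finset.univ.filter (fun σ : Perm (Fin (d+1)) =>
          σ.IsCycle ∧ σ.support = S)) ×ˢ S,
        ∏ y ∈ S, ⟪B y (x y), B (p.1 y) (x (p.1 y))⟫_ℂ := by
    apply Finset.sum_nbij' (fun τ => (Equiv.swap k (τ k) * τ, τ⁻¹ k))
      (fun p => Equiv.swap k (p.1 p.2) * p.1)
    · intro τ hτ
      rw [Finset.mem_filter] at hτ
      obtain ⟨-, hτcyc, hτsupp⟩ := hτ
      have hkmem : k ∈ τ.support := by rw [hτsupp]; exact Finset.mem_insert_self _ _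
      have hτk_ne : τ k ≠ k := Equiv.Perm.mem_support.1 hkmem
      have hτa : τ (τ⁻¹ k) = k := Equiv.apply_symm_apply τ k
      have ha_ne_k : τ⁻¹ k ≠ k := by
        intro hcon
        apply hτk_ne
        calc τ k = τ (τ⁻¹ k) := by rw [hcon]
          _ = k := hτa
      have hττk_ne : τ (τ k) ≠ k := by
        intro hcon
        have h2 : (τ ^ 2) k = k := by
          rw [pow_two, Equiv.Perm.mul_apply, hcon]
        have h21 : τ ^ 2 = 1 := (hτcyc.pow_eq_one_iff' hτk_ne).2 h2
        have hdvd := orderOf_dvd_of_pow_eq_one h21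
        have hle := Nat.le_of_dvd (by norm_num) hdvd
        have hord : orderOf τ = S.card + 1 := by
          rw [hτcyc.orderOf, hτsupp, Finset.card_insert_of_notMem hk]
        omega
      rw [Finset.mem_product]
      constructor
      · rw [Finset.mem_filter]
        refine ⟨Finset.mem_univ _, hτcyc.swap_mul hτk_ne hττk_ne, ?_⟩
        rw [Equiv.Perm.support_swap_mul_eq τ k hττk_ne, hτsupp,
          Finset.sdiff_singleton_eq_erase, Finset.erase_insert hk]
      · have ha_mem : τ⁻¹ k ∈ τ.support := by
          rw [Equiv.Perm.mem_support, hτa]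
          exact Ne.symm ha_ne_k
        rw [hτsupp, Finset.mem_insert] at ha_mem
        exact ha_mem.resolve_left ha_ne_k
    · intro p hp
      rw [Finset.mem_product, Finset.mem_filter] at hp
      obtain ⟨⟨-, hcyc, hsupp⟩, haS⟩ := hp
      have := swap_mul_isCycle_insert hcyc hsupp haS hk
      rw [Finset.mem_filter]
      exact ⟨Finset.mem_univ _, this.1, this.2⟩
    · intro τ hτ
      rw [Finset.mem_filter] at hτ
      obtain ⟨-, hτcyc, hτsupp⟩ := hτ
      have hτa : τ (τ⁻¹ k) = k := Equiv.apply_symm_apply τ k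
      show Equiv.swap k ((Equiv.swap k (τ k) * τ) (τ⁻¹ k)) * (Equiv.swap k (τ k) * τ) = τ
      rw [Equiv.Perm.mul_apply, hτa, Equiv.swap_apply_left, ← mul_assoc,
        Equiv.swap_mul_self, one_mul]
    · intro p hp
      rw [Finset.mem_product, Finset.mem_filter] at hp
      obtain ⟨⟨-, hcyc, hsupp⟩, haS⟩ := hp
      have hkσ : p.1 k = k := by
        rw [← Equiv.Perm.notMem_support, hsupp]
        exact hk
      have hσa_mem : p.1 p.2 ∈ p.1.support :=
        Equiv.Perm.apply_mem_support.2 (hsupp ▸ haS)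
      have hσa_ne_k : p.1 p.2 ≠ k := fun h => hk (h ▸ (hsupp ▸ hσa_mem))
      have hτ'k : (Equiv.swap k (p.1 p.2) * p.1) k = p.1 p.2 := by
        rw [Equiv.Perm.mul_apply, hkσ, Equiv.swap_apply_left]
      have hτ'a : (Equiv.swap k (p.1 p.2) * p.1) p.2 = k := by
        rw [Equiv.Perm.mul_apply, Equiv.swap_apply_right]
      have h1 : Equiv.swap k ((Equiv.swap k (p.1 p.2) * p.1) k)
          * (Equiv.swap k (p.1 p.2) * p.1) = p.1 := by
        rw [hτ'k, ← mul_assoc, Equiv.swap_mul_self, one_mul]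
      have h2 : (Equiv.swap k (p.1 p.2) * p.1)⁻¹ k = p.2 := by
        apply (Equiv.swap k (p.1 p.2) * p.1).injective
        rw [Equiv.Perm.inv_def, Equiv.apply_symm_apply, hτ'a]
      exact Prod.ext h1 h2
    · intro τ hτ
      rfl
  rw [hbij, Finset.sum_product, Finset.mul_sum]
  apply Finset.sum_congr rfl
  intro σ hσ
  have hconst : ∀ a ∈ S, (∏ y ∈ S, ⟪(B y) (x y), (B ((σ, a).1 y)) (x ((σ, a).1 y))⟫_ℂ)
      = ∏ y ∈ S, ⟪(B y) (x y), (B (σ y)) (x (σ y))⟫_ℂ := fun a _ => rfl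
  rw [Finset.sum_congr rfl hconst, Finset.sum_const, nsmul_eq_mul]


lemma inner_self_one {d : ℕ} (Bb : OrthonormalBasis (Fin d) ℂ (EuclideanSpace ℂ (Fin d)))
    (i : Fin d) : ⟪Bb i, Bb i⟫_ℂ = 1 := by
  have := orthonormal_iff_ite.1 Bb.orthonormal i i
  simpa using this

lemma cycSum_all {d : ℕ} (hd : 1 ≤ d)
    (B : Fin (d + 1) → OrthonormalBasis (Fin d) ℂ (EuclideanSpace ℂ (Fin d)))
    (h : ∀ k : Fin (d + 1), IsNUB (fun y : {y : Fin (d + 1) // y ≠ k} => B y.1)) :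
    ∀ n m : ℕ, m + n = d → 2 ≤ m → ∀ S : Finset (Fin (d + 1)), S.card = m →
      ∀ x : Fin (d + 1) → Fin d,
      cycSum (fun y z => ⟪B y (x y), B z (x z)⟫_ℂ) S
        = ((m - 1).factorial : ℂ) / (d : ℂ) ^ (m - 1) := by
  intro n
  induction n with
  | zero =>
    intro m hm h2 S hS x
    have hmd : m = d := by omega
    subst hmd
    have hcompl : Sᶜ.card = 1 := by
      rw [Finset.card_compl, hS, Fintype.card_fin]
      omega
    obtain ⟨k, hk⟩ := Finset.card_eq_one.1 hcompl
    have hSeq : S = Finset.univ.filter (fun y => y ≠ k) := by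
      have h1 : S = ({k} : Finset _)ᶜ := by rw [← hk, compl_compl]
      rw [h1]
      ext y
      simp
    rw [hSeq]
    exact cycSum_compl_eq B k (h k) x
  | succ n ih =>
    intro m hm h2 S hS x
    have hcompl : 1 ≤ Sᶜ.card := by
      rw [Finset.card_compl, hS, Fintype.card_fin]
      omega
    obtain ⟨k, hk⟩ := Finset.card_pos.1 (lt_of_lt_of_le zero_lt_one hcompl)
    have hknotS : k ∉ S := Finset.mem_compl.1 hk
    have hins : ∀ xk : Fin d,
        cycSum (fun y z => ⟪B y (Function.update x k xk y),
          B z (Function.update x k xk z)⟫_ℂ) (insert k S)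
        = ((m).factorial : ℂ) / (d : ℂ) ^ m := by
      intro xk
      have := ih (m + 1) (by omega) (by omega) (insert k S)
        (by rw [Finset.card_insert_of_notMem hknotS, hS]) (Function.update x k xk)
      simpa using this
    have hsum := sum_update_cycSum B x hknotS (le_trans h2 (le_of_eq hS.symm))
    rw [Finset.sum_congr rfl (fun xk _ => hins xk), Finset.sum_const, Finset.card_univ,
      Fintype.card_fin, nsmul_eq_mul, hS] at hsum
    obtain ⟨p, rfl⟩ : ∃ p, m = p + 1 := ⟨m - 1, by omega⟩
    simp only [Nat.add_sub_cancel]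
    have hd0 : (d : ℂ) ≠ 0 := Nat.cast_ne_zero.2 (by omega)
    have hp0 : ((p + 1 : ℕ) : ℂ) ≠ 0 := Nat.cast_ne_zero.2 (by omega)
    have hfact : (((p + 1).factorial : ℕ) : ℂ)
        = ((p + 1 : ℕ) : ℂ) * ((p.factorial : ℕ) : ℂ) := by
      exact_mod_cast Nat.factorial_succ p
    have hgoal' : (d : ℂ) * (((p + 1).factorial : ℂ) / (d : ℂ) ^ (p + 1))
        = ((p + 1 : ℕ) : ℂ) * ((p.factorial : ℂ) / (d : ℂ) ^ p) := by
      rw [hfact, pow_succ]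
      field_simp
    have := hsum.symm.trans hgoal'
    exact mul_left_cancel₀ hp0 this

lemma permSum_univ_zero {d : ℕ} (v : Fin (d + 1) → EuclideanSpace ℂ (Fin d)) :
    permSum (fun y z => ⟪v y, v z⟫_ℂ) (Finset.univ : Finset (Fin (d + 1))) = 0 := by
  classical
  have hdep : ¬ LinearIndependent ℂ v := by
    intro hli
    have hcard := hli.fintype_card_le_finrank
    rw [finrank_euclideanSpace_fin, Fintype.card_fin] at hcard
    omega
  obtain ⟨g, hgsum, i, hgi⟩ := Fintype.not_linearIndependent_iff.1 hdep
  set M : Matrix (Fin (d + 1)) (Fin (d + 1)) ℂ :=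
    Matrix.of (fun y z => ⟪v y, v z⟫_ℂ) with hM
  have hmul : M.mulVec g = 0 := by
    funext y
    show ∑ z, ⟪v y, v z⟫_ℂ * g z = 0
    have hterm : ∀ z : Fin (d + 1), ⟪v y, v z⟫_ℂ * g z = ⟪v y, g z • v z⟫_ℂ := by
      intro z
      rw [inner_smul_right]
      ring
    rw [Finset.sum_congr rfl (fun z _ => hterm z), ← inner_sum, hgsum, inner_zero_right]
  have hdet : M.det = 0 := by
    rw [← Matrix.exists_mulVec_eq_zero_iff]
    exact ⟨g, fun hg0 => hgi (congrFun hg0 i), hmul⟩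
  rw [permSum]
  have hfilter : Finset.univ.filter
      (fun σ : Equiv.Perm (Fin (d + 1)) => σ.support ⊆ Finset.univ) = Finset.univ := by
    apply Finset.filter_true_of_mem
    intro σ _
    exact Finset.subset_univ _
  rw [hfilter, ← hdet, ← Matrix.det_transpose, Matrix.det_apply]
  apply Finset.sum_congr rfl
  intro σ _
  rw [Units.smul_def, zsmul_eq_mul]
  congr 1

end NUBAux

/-- If `d + 1` orthonormal bases of `ℂ^d` are such that every subset of `d` of them
(i.e. omitting any one basis) forms a `d`UB, then all `d + 1` bases together form a
`(d+1)`UB (with constant `d!/d^d`). -/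
theorem stmt_8 (d : ℕ) (hd : 1 ≤ d)
    (B : Fin (d + 1) → OrthonormalBasis (Fin d) ℂ (EuclideanSpace ℂ (Fin d)))
    (h : ∀ k : Fin (d + 1), IsNUB (fun y : {y : Fin (d + 1) // y ≠ k} => B y.1)) :
    IsNUB B := by
  intro x
  classical
  set G : Fin (d + 1) → Fin (d + 1) → ℂ := fun y z => ⟪B y (x y), B z (x z)⟫_ℂ with hG
  have hG1 : ∀ y, G y y = 1 := fun y => NUBAux.inner_self_one (B y) (x y)
  have hcyc : ∀ b : Finset (Fin (d + 1)), 2 ≤ b.card → b.card ≤ d →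
      NUBAux.cycSum G b = ((b.card - 1).factorial : ℂ) / (d : ℂ) ^ (b.card - 1) := by
    intro b h2 hbd
    exact NUBAux.cycSum_all hd B h (d - b.card) b.card (by omega) h2 b rfl x
  have hdet : NUBAux.permSum G Finset.univ = 0 :=
    NUBAux.permSum_univ_zero (fun y => B y (x y))
  have hfin : Fintype.card (Fin (d + 1)) = d + 1 := Fintype.card_fin _
  have hmain := NUBAux.cycSum_univ_eq hd hfin hG1 hcyc hdet
  have hset : nCycles (Fin (d + 1)) = Finset.univ.filter
      (fun σ : Equiv.Perm (Fin (d + 1)) => σ.IsCycle ∧ σ.support = Finset.univ) := by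
    ext σ
    simp [nCycles]
  have hLHS : (∑ σ ∈ nCycles (Fin (d + 1)), ∏ y, ⟪B y (x y), B (σ y) (x (σ y))⟫_ℂ)
      = NUBAux.cycSum G Finset.univ := by
    rw [NUBAux.cycSum, hset]
  rw [hLHS, hmain, hfin]
  simp
end

section
/- Any three pairwise mutually unbiased orthonormal bases of ℂ² form a 3-fold unbiased set (3UB): for all x_1, x_2, x_3 ∈ {1,2}, ⟨1_{x_1}|2_{x_2}⟩⟨2_{x_2}|3_{x_3}⟩⟨3_{x_3}|1_{x_1}⟩ + ⟨1_{x_1}|3_{x_3}⟩⟨3_{x_3}|2_{x_2}⟩⟨2_{x_2}|1_{x_1}⟩ = 2!/2² = 1/2. -/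
/-!
Expand `⟪u, w⟫ = p + q` in the middle basis, where `p, q` are the two paths `u → B i → w`.
The two cyclic products then sum to `p * conj (p + q) + (p + q) * conj p`, which equals
`‖p + q‖² + ‖p‖² - ‖q‖²`. Unbiasedness gives `‖p‖ = ‖q‖ = 1/2` and `‖p + q‖² = 1/2`.
-/

open scoped InnerProductSpace ComplexConjugate

namespace RCLike

variable {𝕜 : Type*} [RCLike 𝕜]

lemma mul_conj_add_add_add_mul_conj (p q : 𝕜) :
    p * conj (p + q) + (p + q) * conj p = (‖p + q‖ ^ 2 + ‖p‖ ^ 2 - ‖q‖ ^ 2 : ℝ) := by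
  push_cast
  rw [← mul_conj, ← mul_conj, ← mul_conj, map_add]
  ring

end RCLike

section

variable {𝕜 E : Type*} [RCLike 𝕜] [NormedAddCommGroup E] [InnerProductSpace 𝕜 E]

lemma OrthonormalBasis.inner_eq_add_of_fin_two (B : OrthonormalBasis (Fin 2) 𝕜 E) (i : Fin 2)
    (u w : E) :
    ⟪u, w⟫_𝕜 = ⟪u, B i⟫_𝕜 * ⟪B i, w⟫_𝕜 + ⟪u, B (i + 1)⟫_𝕜 * ⟪B (i + 1), w⟫_𝕜 := by
  rw [← B.sum_inner_mul_inner u w, Fin.sum_univ_two]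
  fin_cases i <;> simp [add_comm]

lemma OrthonormalBasis.cyclic_inner_add_eq_norm_sq_of_fin_two (B : OrthonormalBasis (Fin 2) 𝕜 E)
    (i : Fin 2) (u w : E)
    (h : ‖⟪u, B i⟫_𝕜 * ⟪B i, w⟫_𝕜‖ = ‖⟪u, B (i + 1)⟫_𝕜 * ⟪B (i + 1), w⟫_𝕜‖) :
    ⟪u, B i⟫_𝕜 * ⟪B i, w⟫_𝕜 * ⟪w, u⟫_𝕜 + ⟪u, w⟫_𝕜 * ⟪w, B i⟫_𝕜 * ⟪B i, u⟫_𝕜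
      = (‖⟪u, w⟫_𝕜‖ ^ 2 : ℝ) := by
  have hp : ⟪w, B i⟫_𝕜 * ⟪B i, u⟫_𝕜 = conj (⟪u, B i⟫_𝕜 * ⟪B i, w⟫_𝕜) := by
    rw [map_mul, inner_conj_symm, inner_conj_symm, mul_comm]
  rw [← inner_conj_symm w u, mul_assoc _ (⟪w, B i⟫_𝕜), hp, B.inner_eq_add_of_fin_two i u w,
    RCLike.mul_conj_add_add_add_mul_conj, h, add_sub_cancel_right]

end

/-- Any three pairwise mutually unbiased orthonormal bases of `ℂ²` form a 3-fold unbiased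
set: for all index choices, the sum of the two cyclic triple products of overlaps equals
`2!/2² = 1/2`. -/
theorem stmt_9 (B₁ B₂ B₃ : OrthonormalBasis (Fin 2) ℂ (EuclideanSpace ℂ (Fin 2)))
    (h12 : ∀ i j, ‖⟪B₁ i, B₂ j⟫_ℂ‖ = 1 / Real.sqrt 2)
    (h13 : ∀ i j, ‖⟪B₁ i, B₃ j⟫_ℂ‖ = 1 / Real.sqrt 2)
    (h23 : ∀ i j, ‖⟪B₂ i, B₃ j⟫_ℂ‖ = 1 / Real.sqrt 2)
    (x₁ x₂ x₃ : Fin 2) :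
    ⟪B₁ x₁, B₂ x₂⟫_ℂ * ⟪B₂ x₂, B₃ x₃⟫_ℂ * ⟪B₃ x₃, B₁ x₁⟫_ℂ
      + ⟪B₁ x₁, B₃ x₃⟫_ℂ * ⟪B₃ x₃, B₂ x₂⟫_ℂ * ⟪B₂ x₂, B₁ x₁⟫_ℂ = 1 / 2 := by
  have hpaths : ‖⟪B₁ x₁, B₂ x₂⟫_ℂ * ⟪B₂ x₂, B₃ x₃⟫_ℂ‖
      = ‖⟪B₁ x₁, B₂ (x₂ + 1)⟫_ℂ * ⟪B₂ (x₂ + 1), B₃ x₃⟫_ℂ‖ := by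
    simp only [norm_mul, h12, h23]
  rw [B₂.cyclic_inner_add_eq_norm_sq_of_fin_two x₂ _ _ hpaths, h13, div_pow,
    Real.sq_sqrt zero_le_two]
  norm_num
end

section
/- There do not exist four orthonormal bases of ℂ² forming a 4-fold unbiased set (4UB); more generally, for every n ≥ 4 there is no n-fold unbiased set of bases in dimension 2. -/
open scoped InnerProductSpace

/-!
Weight the defining identity of an `n`UB by `∏ y, W y (x y)` and sum over all index tuples `x`.
For a full cycle `σ`, expanding multilinearly and using that the trace of a cyclic product of
rank-one operators is the cyclic product of overlaps, the weighted sum becomes the trace of the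
product, in the order of `σ`, of the operators `D y = ∑ a, W y a • |B y a⟩⟨B y a|`. Choose
`W y = 1` (so `D y = 1`) except at two bases `i ≠ j`, with `∑ a, W j a = 0`. Then the constant
right-hand side sums to zero, hence so does
`tr (D i * D j) = ∑ a b, W i a * W j b * |⟪B i a, B j b⟫|²`.
Thus `|⟪B i a, B j b⟫|²` does not depend on `b`, so it equals `1 / d`: the bases are pairwise
mutually unbiased. In `ℂ²` the Bloch vectors of the first vectors of pairwise mutually unbiased
bases are orthonormal in `ℝ³`, so there are at most three such bases.
-/

theorem List.prod_ofFn_eq_of_forall_ne_eq_one {M : Type*} [Monoid M] :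
    ∀ {n : ℕ} (F : Fin n → M) (m : Fin n), (∀ k, k ≠ m → F k = 1) → (List.ofFn F).prod = F m
  | _ + 1, F, m, hF => by
    rw [List.ofFn_succ, List.prod_cons]
    cases m using Fin.cases with
    | zero =>
      rw [List.prod_eq_one, mul_one]
      simpa [List.mem_ofFn] using fun k => hF k.succ (Fin.succ_ne_zero k)
    | succ m =>
      rw [hF 0 (Fin.succ_ne_zero m).symm, one_mul,
        List.prod_ofFn_eq_of_forall_ne_eq_one _ m fun k hk => hF _ (Fin.succ_injective _ |>.ne hk)]

section RankOne

open InnerProductSpace (rankOne)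

variable {𝕜 E : Type*} [RCLike 𝕜] [NormedAddCommGroup E] [InnerProductSpace 𝕜 E]

theorem list_prod_ofFn_rankOne {n : ℕ} (v w : Fin (n + 1) → E) :
    (List.ofFn fun k => rankOne 𝕜 (v k) (w k)).prod
      = (∏ k : Fin n, ⟪w k.castSucc, v k.succ⟫_𝕜) • rankOne 𝕜 (v 0) (w (Fin.last n)) := by
  induction n with
  | zero => simp
  | succ n ih =>
    rw [List.ofFn_succ, List.prod_cons, ih, mul_smul_comm, ContinuousLinearMap.mul_def,
      InnerProductSpace.rankOne_comp_rankOne, smul_smul, Fin.prod_univ_succ, mul_comm]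
    simp

theorem trace_list_prod_ofFn_rankOne [FiniteDimensional 𝕜 E] {n : ℕ} (v w : Fin (n + 1) → E) :
    LinearMap.trace 𝕜 E (List.ofFn fun k => rankOne 𝕜 (v k) (w k)).prod
      = ∏ k, ⟪w k, v (k + 1)⟫_𝕜 := by
  rw [list_prod_ofFn_rankOne, ContinuousLinearMap.toLinearMap_smul, map_smul,
    InnerProductSpace.trace_rankOne, Fin.prod_univ_castSucc]
  simp [Fin.coeSucc_eq_succ]

end RankOne

section Diagonal

open InnerProductSpace (rankOne)

variable {𝕜 E κ : Type*} [RCLike 𝕜] [NormedAddCommGroup E] [InnerProductSpace 𝕜 E] [Fintype κ]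

noncomputable def OrthonormalBasis.diagonalOp (b : OrthonormalBasis κ 𝕜 E) (w : κ → 𝕜) :
    E →L[𝕜] E :=
  ∑ a, w a • rankOne 𝕜 (b a) (b a)

theorem OrthonormalBasis.diagonalOp_one (b : OrthonormalBasis κ 𝕜 E) : b.diagonalOp 1 = 1 := by
  simp [diagonalOp, b.sum_rankOne_eq_id, ContinuousLinearMap.one_def]

theorem OrthonormalBasis.trace_diagonalOp_mul_diagonalOp [FiniteDimensional 𝕜 E]
    (b c : OrthonormalBasis κ 𝕜 E) (v w : κ → 𝕜) :
    LinearMap.trace 𝕜 E ↑(b.diagonalOp v * c.diagonalOp w)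
      = ∑ a, ∑ a', v a * w a' * (‖⟪b a, c a'⟫_𝕜‖ : 𝕜) ^ 2 := by
  have hmul : b.diagonalOp v * c.diagonalOp w
      = ∑ a, ∑ a', (v a * w a' * ⟪b a, c a'⟫_𝕜) • rankOne 𝕜 (b a) (c a') := by
    simp only [diagonalOp, Finset.sum_mul, Finset.mul_sum, smul_mul_smul_comm,
      ContinuousLinearMap.mul_def, InnerProductSpace.rankOne_comp_rankOne, smul_smul]
    exact Finset.sum_comm
  rw [hmul]
  simp only [ContinuousLinearMap.toLinearMap_sum, ContinuousLinearMap.toLinearMap_smul, map_sum,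
    map_smul, InnerProductSpace.trace_rankOne, smul_eq_mul]
  refine Finset.sum_congr rfl fun a _ => Finset.sum_congr rfl fun a' _ => ?_
  rw [mul_assoc, ← inner_conj_symm (c a') (b a), RCLike.mul_conj]

theorem sum_prod_inner_eq_trace_list_prod_diagonalOp [FiniteDimensional 𝕜 E] {n : ℕ}
    (C : Fin (n + 1) → OrthonormalBasis κ 𝕜 E) (W : Fin (n + 1) → κ → 𝕜) :
    ∑ u : Fin (n + 1) → κ, (∏ k, W k (u k)) * ∏ k, ⟪C k (u k), C (k + 1) (u (k + 1))⟫_𝕜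
      = LinearMap.trace 𝕜 E (List.ofFn fun k => (C k).diagonalOp (W k)).prod := by
  have hD : ∀ k, (C k).diagonalOp (W k) = ∑ a, rankOne 𝕜 (W k a • C k a) (C k a) := by
    simp [OrthonormalBasis.diagonalOp]
  have hexpand := (MultilinearMap.mkPiAlgebraFin 𝕜 (n + 1) (E →L[𝕜] E)).map_sum
    fun k a => rankOne 𝕜 (W k a • C k a) (C k a)
  simp only [MultilinearMap.mkPiAlgebraFin_apply] at hexpand
  simp only [hD, hexpand, ContinuousLinearMap.toLinearMap_sum, map_sum,
    trace_list_prod_ofFn_rankOne, inner_smul_right, Finset.prod_mul_distrib]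
  refine Finset.sum_congr rfl fun u _ => ?_
  congr 1
  exact (Fintype.prod_equiv (Equiv.addRight 1) _ _ fun _ => rfl).symm

end Diagonal

theorem Equiv.Perm.IsCycle.exists_fin_enumeration {ι : Type*} [Fintype ι] [DecidableEq ι]
    {σ : Equiv.Perm ι} (hσ : σ.IsCycle) (hs : σ.support = Finset.univ) (i : ι) :
    ∃ (n : ℕ) (e : Fin (n + 1) ≃ ι), e 0 = i ∧ ∀ k, σ (e k) = e (k + 1) := by
  obtain ⟨n, hn⟩ : ∃ n, Fintype.card ι = n + 1 :=
    Nat.exists_eq_add_one.mpr (Fintype.card_pos_iff.mpr ⟨i⟩)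
  have hord : orderOf σ = n + 1 := by rw [hσ.orderOf, hs, Finset.card_univ, hn]
  have hpow : ∀ m : ℕ, σ ^ (m % (n + 1)) = σ ^ m := fun m => by rw [← hord, pow_mod_orderOf]
  let f : Fin (n + 1) → ι := fun k => (σ ^ (k : ℕ)) i
  have hsurj : Function.Surjective f := by
    intro y
    have hmoved : ∀ z, σ z ≠ z := fun z => Equiv.Perm.mem_support.mp (hs ▸ Finset.mem_univ z)
    obtain ⟨m, hm⟩ := hσ.exists_pow_eq (hmoved i) (hmoved y)
    exact ⟨Fin.ofNat (n + 1) m, by simp only [f, Fin.val_ofNat, hpow, hm]⟩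
  have hbij : Function.Bijective f :=
    (Fintype.bijective_iff_surjective_and_card f).mpr ⟨hsurj, by simp [hn]⟩
  refine ⟨n, Equiv.ofBijective f hbij, by simp [f], fun k => ?_⟩
  have hk : ((k + 1 : Fin (n + 1)) : ℕ) = ((k : ℕ) + 1) % (n + 1) := by simp [Fin.val_add]
  simp only [Equiv.ofBijective_apply, f, hk, hpow, pow_succ', Equiv.Perm.mul_apply]

theorem nCycles_nonempty {ι : Type} [Fintype ι] [DecidableEq ι] (h : 2 ≤ Fintype.card ι) :
    (nCycles ι).Nonempty := by
  have hnodup := Finset.univ.nodup_toList (α := ι)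
  refine ⟨Finset.univ.toList.formPerm, ?_⟩
  simp only [nCycles, Finset.mem_filter, Finset.mem_univ, true_and]
  refine ⟨List.isCycle_formPerm hnodup (by simpa using h), ?_⟩
  rw [List.support_formPerm_of_nodup _ hnodup, Finset.toList_toFinset]
  intro x hx
  have hlen := congrArg List.length hx
  rw [Finset.length_toList, Finset.card_univ, List.length_singleton] at hlen
  omega

section Cycle

variable {𝕜 E κ ι : Type*} [RCLike 𝕜] [NormedAddCommGroup E] [InnerProductSpace 𝕜 E]
  [FiniteDimensional 𝕜 E] [Fintype κ] [Fintype ι] [DecidableEq ι]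

theorem sum_prod_inner_cycle_eq_trace (B : ι → OrthonormalBasis κ 𝕜 E) (W : ι → κ → 𝕜)
    {σ : Equiv.Perm ι} {n : ℕ} (e : Fin (n + 1) ≃ ι) (he : ∀ k, σ (e k) = e (k + 1)) :
    ∑ x : ι → κ, (∏ y, W y (x y)) * ∏ y, ⟪B y (x y), B (σ y) (x (σ y))⟫_𝕜
      = LinearMap.trace 𝕜 E (List.ofFn fun k => (B (e k)).diagonalOp (W (e k))).prod := by
  rw [← sum_prod_inner_eq_trace_list_prod_diagonalOp, ← (e.arrowCongr (Equiv.refl κ)).sum_comp]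
  refine Finset.sum_congr rfl fun u _ => ?_
  simp only [← e.prod_comp, he, Equiv.arrowCongr_apply, Function.comp_apply,
    Equiv.symm_apply_apply, Equiv.refl_apply]

theorem sum_prod_inner_cycle_eq_trace_mul (B : ι → OrthonormalBasis κ 𝕜 E) {σ : Equiv.Perm ι}
    (hσ : σ.IsCycle) (hs : σ.support = Finset.univ) {i j : ι} (hij : i ≠ j) (W : ι → κ → 𝕜)
    (hW : ∀ y, y ≠ i → y ≠ j → W y = 1) :
    ∑ x : ι → κ, (∏ y, W y (x y)) * ∏ y, ⟪B y (x y), B (σ y) (x (σ y))⟫_𝕜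
      = LinearMap.trace 𝕜 E ↑((B i).diagonalOp (W i) * (B j).diagonalOp (W j)) := by
  obtain ⟨n, e, he0, he⟩ := hσ.exists_fin_enumeration hs i
  obtain ⟨m, hm⟩ : ∃ m : Fin n, e m.succ = j := by
    have hj0 : e.symm j ≠ 0 := fun h0 => hij (by rw [← he0, ← h0, e.apply_symm_apply])
    obtain ⟨m, hm⟩ := Fin.exists_succ_eq.mpr hj0
    exact ⟨m, by rw [hm, e.apply_symm_apply]⟩
  rw [sum_prod_inner_cycle_eq_trace B W e he, List.ofFn_succ, List.prod_cons,
    List.prod_ofFn_eq_of_forall_ne_eq_one _ m, he0, hm]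
  intro k hk
  have hki : e k.succ ≠ i := he0 ▸ e.injective.ne (Fin.succ_ne_zero k)
  have hkj : e k.succ ≠ j := hm ▸ e.injective.ne (Fin.succ_injective _ |>.ne hk)
  rw [hW _ hki hkj, OrthonormalBasis.diagonalOp_one]

end Cycle

section NUB

variable {ι : Type} [Fintype ι] [DecidableEq ι] {d : ℕ}
  {B : ι → OrthonormalBasis (Fin d) ℂ (EuclideanSpace ℂ (Fin d))}

theorem IsNUB.trace_diagonalOp_mul_eq_zero (hB : IsNUB B) {i j : ι} (hij : i ≠ j)
    (W : ι → Fin d → ℂ) (hW : ∀ y, y ≠ i → y ≠ j → W y = 1) (hWj : ∑ a, W j a = 0) :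
    LinearMap.trace ℂ (EuclideanSpace ℂ (Fin d))
      ↑((B i).diagonalOp (W i) * (B j).diagonalOp (W j)) = 0 := by
  set T := LinearMap.trace ℂ (EuclideanSpace ℂ (Fin d))
    ↑((B i).diagonalOp (W i) * (B j).diagonalOp (W j))
  have hcycle : ∀ σ ∈ nCycles ι,
      ∑ x : ι → Fin d, (∏ y, W y (x y)) * ∏ y, ⟪B y (x y), B (σ y) (x (σ y))⟫_ℂ = T := by
    intro σ hσ
    simp only [nCycles, Finset.mem_filter, Finset.mem_univ, true_and] at hσ
    exact sum_prod_inner_cycle_eq_trace_mul B hσ.1 hσ.2 hij W hW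
  have hcard : (nCycles ι).card ≠ 0 :=
    (nCycles_nonempty (Fintype.one_lt_card_iff.mpr ⟨i, j, hij⟩)).card_pos.ne'
  have hzero : ((nCycles ι).card : ℂ) * T = 0 := calc
    _ = ∑ σ ∈ nCycles ι, ∑ x : ι → Fin d,
          (∏ y, W y (x y)) * ∏ y, ⟪B y (x y), B (σ y) (x (σ y))⟫_ℂ := by
      rw [Finset.sum_congr rfl hcycle, Finset.sum_const, nsmul_eq_mul]
    _ = ∑ x : ι → Fin d,
          (∏ y, W y (x y)) * ∑ σ ∈ nCycles ι, ∏ y, ⟪B y (x y), B (σ y) (x (σ y))⟫_ℂ := by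
      rw [Finset.sum_comm]
      simp_rw [Finset.mul_sum]
    _ = (∏ y, ∑ a, W y a)
          * ((Fintype.card ι - 1).factorial / (d : ℂ) ^ (Fintype.card ι - 1)) := by
      simp_rw [hB _, ← Finset.sum_mul, Fintype.prod_sum]
    _ = 0 := by rw [Finset.prod_eq_zero (Finset.mem_univ j) hWj, zero_mul]
  exact (mul_eq_zero.mp hzero).resolve_left (Nat.cast_ne_zero.mpr hcard)

theorem IsNUB.norm_inner_sq_eq (hB : IsNUB B) {i j : ι} (hij : i ≠ j) (a b : Fin d) :
    ‖⟪B i a, B j b⟫_ℂ‖ ^ 2 = 1 / d := by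
  have heq : ∀ b', ‖⟪B i a, B j b'⟫_ℂ‖ ^ 2 = ‖⟪B i a, B j b⟫_ℂ‖ ^ 2 := by
    intro b'
    let W : ι → Fin d → ℂ := fun y =>
      if y = i then Pi.single a 1 else if y = j then Pi.single b' 1 - Pi.single b 1 else 1
    have h := IsNUB.trace_diagonalOp_mul_eq_zero hB hij W (fun y hi hj => by simp [W, hi, hj])
      (by simp [W, hij.symm])
    rw [OrthonormalBasis.trace_diagonalOp_mul_diagonalOp] at h
    simp only [W, ↓reduceIte, hij.symm, Pi.single_apply, Pi.sub_apply, mul_sub, mul_ite, mul_one,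
      mul_zero, Complex.coe_algebraMap, sub_mul, ite_mul, one_mul, zero_mul,
      Finset.sum_sub_distrib, Finset.sum_ite_eq', Finset.mem_univ] at h
    exact_mod_cast sub_eq_zero.mp h
  have hsum := (B j).sum_sq_norm_inner_left (B i a)
  rw [Finset.sum_congr rfl fun b' _ => heq b', Finset.sum_const, Finset.card_univ,
    Fintype.card_fin, nsmul_eq_mul, (B i).orthonormal.1 a, one_pow] at hsum
  have hd : (d : ℝ) ≠ 0 := Nat.cast_ne_zero.mpr (Fin.pos a).ne'
  rw [eq_div_iff hd]
  linarith

end NUB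

section Bloch

open ComplexConjugate

noncomputable def blochVector (u : EuclideanSpace ℂ (Fin 2)) : EuclideanSpace ℝ (Fin 3) :=
  !₂[‖u 0‖ ^ 2 - ‖u 1‖ ^ 2, 2 * (conj (u 0) * u 1).re, 2 * (conj (u 0) * u 1).im]

theorem inner_blochVector (u v : EuclideanSpace ℂ (Fin 2)) :
    ⟪blochVector u, blochVector v⟫_ℝ = 2 * ‖⟪u, v⟫_ℂ‖ ^ 2 - ‖u‖ ^ 2 * ‖v‖ ^ 2 := by
  simp only [blochVector, EuclideanSpace.inner_eq_star_dotProduct, EuclideanSpace.norm_sq_eq,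
    Fin.sum_univ_two, Fin.sum_univ_three, dotProduct, Complex.sq_norm, Complex.normSq_apply,
    Fin.isValue, Complex.mul_re, Complex.conj_re, Complex.conj_im, neg_mul,
    sub_neg_eq_add, Complex.mul_im, Matrix.cons_val_zero, Pi.star_apply, star_trivial,
    Matrix.cons_val_one, Matrix.cons_val, RCLike.star_def, Complex.add_re, mul_neg, Complex.add_im]
  ring

theorem card_le_three_of_norm_inner_sq_eq_half {ι : Type*} [Fintype ι]
    (v : ι → EuclideanSpace ℂ (Fin 2)) (hv : ∀ i, ‖v i‖ = 1)
    (h : Pairwise fun i j => ‖⟪v i, v j⟫_ℂ‖ ^ 2 = 1 / 2) : Fintype.card ι ≤ 3 := by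
  classical
  have hon : Orthonormal ℝ (blochVector ∘ v) := by
    refine orthonormal_iff_ite.mpr fun i j => ?_
    rw [Function.comp_apply, Function.comp_apply, inner_blochVector, hv, hv]
    split_ifs with hij
    · rw [hij, inner_self_eq_norm_sq_to_K, hv]
      norm_num
    · rw [h hij]
      norm_num
  simpa using hon.linearIndependent.fintype_card_le_finrank

end Bloch

/-- For every `n ≥ 4` there is no `n`-fold unbiased set of orthonormal bases in dimension 2;
in particular no four orthonormal bases of `ℂ²` form a 4UB. -/
theorem stmt_11 (n : ℕ) (hn : 4 ≤ n)
    (B : Fin n → OrthonormalBasis (Fin 2) ℂ (EuclideanSpace ℂ (Fin 2))) :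
    ¬ IsNUB B := by
  intro hB
  have hcard := card_le_three_of_norm_inner_sq_eq_half (fun k => B k 0)
    (fun k => (B k).orthonormal.1 0)
    fun _ _ hij => (IsNUB.norm_inner_sq_eq hB hij 0 0).trans (by norm_num)
  rw [Fintype.card_fin] at hcard
  omega
end

section
/- There do not exist three orthonormal bases of ℂ⁴ forming a 3-fold unbiased set (3UB); consequently there are no n-fold unbiased sets in dimension 4 for any n ≥ 3. -/
open scoped InnerProductSpace

/-!
Fix three distinct members `a, b, c` of the family. Summing the unbiasedness condition over
the indices of all other bases contracts every full cycle, one vertex at a time, to one of the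
two 3-cycles on `a, b, c`; their weights are the Bargmann invariant
`⟪aᵢ, bⱼ⟫⟪bⱼ, cₖ⟫⟪cₖ, aᵢ⟫` and its conjugate. So the real part of the invariant does not
depend on `i, j, k`, and Parseval's identity then forces it to be `1/d²` and the three bases
to be mutually unbiased, whence `(Im)² = (d - 1)/d⁴`. For `i ≠ i'` the orthogonality of `aᵢ`
and `aᵢ'` makes `∑ⱼ zᵢⱼ · conj zᵢ'ⱼ` vanish, where `zᵢⱼ` is the invariant of `aᵢ, bⱼ, c₀`. Its
real part is `∑ⱼ (1 ± (d - 1))/d⁴`, so `d - 1` would divide `d`, which fails for `d ≥ 3`.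
-/

open Equiv Equiv.Perm Finset
open scoped ComplexConjugate

section Bargmann

variable {κ E : Type*} [Fintype κ] [NormedAddCommGroup E] [InnerProductSpace ℂ E]

noncomputable def bargmann (u v w : E) : ℂ := ⟪u, v⟫_ℂ * ⟪v, w⟫_ℂ * ⟪w, u⟫_ℂ

lemma conj_bargmann (u v w : E) : conj (bargmann u v w) = bargmann u w v := by
  simp only [bargmann, map_mul, inner_conj_symm]
  ring

lemma norm_bargmann (u v w : E) :
    ‖bargmann u v w‖ = ‖⟪u, v⟫_ℂ‖ * ‖⟪v, w⟫_ℂ‖ * ‖⟪w, u⟫_ℂ‖ := by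
  simp only [bargmann, norm_mul]

lemma inner_mul_inner_swap (u v : E) : ⟪u, v⟫_ℂ * ⟪v, u⟫_ℂ = (‖⟪u, v⟫_ℂ‖ : ℂ) ^ 2 := by
  rw [← inner_conj_symm v u, RCLike.mul_conj]
  rfl

lemma OrthonormalBasis.inner_self_apply (b : OrthonormalBasis κ ℂ E) (i : κ) :
    ⟪b i, b i⟫_ℂ = 1 :=
  inner_self_eq_one_of_norm_eq_one (b.orthonormal.1 i)

lemma OrthonormalBasis.sum_re_bargmann (b : OrthonormalBasis κ ℂ E) (u v : E) :
    ∑ k, (bargmann u v (b k)).re = ‖⟪u, v⟫_ℂ‖ ^ 2 := by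
  rw [← Complex.re_sum]
  simp only [bargmann, mul_assoc, ← mul_sum, b.sum_inner_mul_inner, inner_mul_inner_swap,
    ← Complex.ofReal_pow, Complex.ofReal_re]

lemma OrthonormalBasis.sum_bargmann_mul_conj_eq_zero (b : OrthonormalBasis κ ℂ E)
    {u u' : E} (huu' : ⟪u, u'⟫_ℂ = 0) (w : E) {m : ℝ} (hw : ∀ j, ‖⟪b j, w⟫_ℂ‖ ^ 2 = m) :
    ∑ j, bargmann u (b j) w * conj (bargmann u' (b j) w) = 0 := by
  have hterm : ∀ j, bargmann u (b j) w * conj (bargmann u' (b j) w)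
      = (m * ⟪w, u⟫_ℂ * ⟪u', w⟫_ℂ) * (⟪u, b j⟫_ℂ * ⟪b j, u'⟫_ℂ) := by
    intro j
    rw [conj_bargmann, ← hw j, Complex.ofReal_pow, ← inner_mul_inner_swap]
    simp only [bargmann]
    ring
  simp only [hterm, ← mul_sum, b.sum_inner_mul_inner, huu', mul_zero]

end Bargmann

section Cycles

variable {ι : Type*} [DecidableEq ι] [Fintype ι]

lemma Equiv.Perm.IsCycle.apply_apply_ne {σ : Perm ι} (hσ : σ.IsCycle) (h3 : 3 ≤ #σ.support)
    {p : ι} (hp : p ∈ σ.support) : σ (σ p) ≠ p := by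
  intro h
  have hsq : σ ^ 2 = 1 := (hσ.pow_eq_one_iff' (mem_support.1 hp)).2 h
  have hcard : #σ.support ≤ 2 :=
    hσ.orderOf ▸ Nat.le_of_dvd two_pos (orderOf_dvd_of_pow_eq_one hsq)
  omega

lemma Equiv.Perm.eq_or_eq_of_support_eq_three {σ : Perm ι} {a b c : ι}
    (hab : a ≠ b) (hac : a ≠ c) (hbc : b ≠ c) (hσ : σ.support = {a, b, c}) :
    (σ a = b ∧ σ b = c ∧ σ c = a) ∨ (σ a = c ∧ σ c = b ∧ σ b = a) := by
  have hmaps : ∀ y ∈ ({a, b, c} : Finset ι), σ y ≠ y ∧ σ y ∈ ({a, b, c} : Finset ι) :=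
    fun y hy => ⟨mem_support.1 (hσ ▸ hy), hσ ▸ apply_mem_support.2 (hσ ▸ hy)⟩
  simp only [mem_insert, mem_singleton, forall_eq_or_imp, forall_eq] at hmaps
  grind [σ.injective.eq_iff]

end Cycles

section AgreeOff

variable {ι κ : Type*} [DecidableEq ι] [Fintype ι] [DecidableEq κ] [Fintype κ]

def agreeOff (U : Finset ι) (f : ι → κ) : Finset (ι → κ) := {x | ∀ y ∉ U, x y = f y}

lemma agreeOff_empty (f : ι → κ) : agreeOff ∅ f = {f} := by
  ext x
  simp [agreeOff, funext_iff]

lemma sum_agreeOff_insert {M : Type*} [AddCommMonoid M] {U : Finset ι} {p : ι} (hp : p ∉ U)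
    (f : ι → κ) (F : (ι → κ) → M) :
    ∑ x ∈ agreeOff (insert p U) f, F x = ∑ x ∈ agreeOff U f, ∑ m, F (Function.update x p m) := by
  rw [← sum_product' (t := univ) (f := fun x m => F (Function.update x p m))]
  refine sum_nbij' (fun x => (Function.update x p (f p), x p))
    (fun z => Function.update z.1 p z.2) ?_ ?_ ?_ ?_ ?_ <;>
    simp [agreeOff, Function.update_apply] <;> grind

lemma card_agreeOff (U : Finset ι) (f : ι → κ) : #(agreeOff U f) = Fintype.card κ ^ #U := by
  induction U using Finset.induction_on with
  | empty => simp [agreeOff_empty]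
  | insert p U hp ih =>
    rw [card_eq_sum_ones, sum_agreeOff_insert hp, card_insert_of_notMem hp, pow_succ, ← ih,
      card_eq_sum_ones, sum_mul]
    simp

end AgreeOff

section CycleWeight

variable {ι κ E : Type*} [DecidableEq ι] [Fintype ι] [Fintype κ]
  [NormedAddCommGroup E] [InnerProductSpace ℂ E] (B : ι → OrthonormalBasis κ ℂ E) {a b c : ι}

noncomputable def cycleWeight (σ : Perm ι) (x : ι → κ) : ℂ :=
  ∏ y, ⟪B y (x y), B (σ y) (x (σ y))⟫_ℂ

lemma cycleWeight_eq_prod_support (σ : Perm ι) (x : ι → κ) :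
    cycleWeight B σ x = ∏ y ∈ σ.support, ⟪B y (x y), B (σ y) (x (σ y))⟫_ℂ :=
  (prod_subset (subset_univ _) fun y _ hy => by
    rw [notMem_support.1 hy, (B y).inner_self_apply]).symm

lemma cycleWeight_of_support_eq_three (hab : a ≠ b) (hac : a ≠ c) (hbc : b ≠ c) {σ : Perm ι}
    (hσ : σ.support = {a, b, c}) (x : ι → κ) :
    cycleWeight B σ x = bargmann (B a (x a)) (B b (x b)) (B c (x c)) ∨
      cycleWeight B σ x = bargmann (B a (x a)) (B c (x c)) (B b (x b)) := by
  rw [cycleWeight_eq_prod_support, hσ, prod_insert (by simp [hab, hac]),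
    prod_insert (by simpa), prod_singleton]
  rcases eq_or_eq_of_support_eq_three hab hac hbc hσ with ⟨h1, h2, h3⟩ | ⟨h1, h2, h3⟩
  · left
    simp only [h1, h2, h3, bargmann, mul_assoc]
  · right
    simp only [h1, h2, h3, bargmann]
    ring

/-- Summing out the index at `p` splices `p` out of the cycle, since completeness of `B p`
contracts the two factors through `p` to a single overlap. -/
lemma sum_cycleWeight_update {σ : Perm ι} {p : ι} (hp : σ p ≠ p) (x : ι → κ) :
    ∑ m, cycleWeight B σ (Function.update x p m) = cycleWeight B (swap p (σ p) * σ) x := by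
  set q := σ.symm p
  have hq : σ q = p := σ.apply_symm_apply p
  have hqp : q ≠ p := fun h => hp (h ▸ hq)
  set τ := swap p (σ p) * σ
  have hτq : τ q = σ p := by simp [τ, hq]
  have hτp : τ p = p := by simp [τ]
  let g (π : Perm ι) (z : ι → κ) (y : ι) := ⟪B y (z y), B (π y) (z (π y))⟫_ℂ
  have split : ∀ π z, cycleWeight B π z = g π z p * g π z q * ∏ y ∈ {p, q}ᶜ, g π z y :=
    fun π z => by rw [← prod_pair hqp.symm, prod_mul_prod_compl]; rfl
  have hrest : ∀ m, ∏ y ∈ {p, q}ᶜ, g σ (Function.update x p m) y = ∏ y ∈ {p, q}ᶜ, g τ x y := by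
    refine fun m => prod_congr rfl fun y hy => ?_
    obtain ⟨hyp, hyq⟩ : y ≠ p ∧ y ≠ q := by simpa using hy
    have h1 : σ y ≠ p := fun h => hyq (σ.injective (h.trans hq.symm))
    have h2 : σ y ≠ σ p := σ.injective.ne hyp
    simp only [g, τ, Perm.mul_apply, swap_apply_of_ne_of_ne h1 h2, Function.update_of_ne hyp,
      Function.update_of_ne h1]
  simp only [split, hrest, ← sum_mul]
  congr 1
  simp only [g, hτp, hτq, hq, Function.update_self, Function.update_of_ne hqp,
    Function.update_of_ne hp, (B p).inner_self_apply, one_mul]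
  rw [← (B p).sum_inner_mul_inner]
  exact sum_congr rfl fun m _ => mul_comm _ _

lemma sum_agreeOff_cycleWeight [DecidableEq κ] (hab : a ≠ b) (hac : a ≠ c) (hbc : b ≠ c)
    (f : ι → κ) (U : Finset ι) (hU : Disjoint U {a, b, c}) {σ : Perm ι} (hσ : σ.IsCycle)
    (hσU : σ.support = U ∪ {a, b, c}) :
    ∑ x ∈ agreeOff U f, cycleWeight B σ x = bargmann (B a (f a)) (B b (f b)) (B c (f c)) ∨
      ∑ x ∈ agreeOff U f, cycleWeight B σ x = bargmann (B a (f a)) (B c (f c)) (B b (f b)) := by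
  induction U using Finset.induction_on generalizing σ with
  | empty =>
    rw [agreeOff_empty, sum_singleton]
    exact cycleWeight_of_support_eq_three B hab hac hbc (by simpa using hσU) f
  | insert p U hpU ih =>
    have hp : p ∈ σ.support := by simp [hσU]
    have h3 : 3 ≤ #σ.support := by
      rw [hσU]
      refine (card_le_card subset_union_right).trans' ?_
      rw [card_insert_of_notMem (by simp [hab, hac]), card_pair hbc]
    have hpp := hσ.apply_apply_ne h3 hp
    rw [sum_agreeOff_insert hpU]
    simp only [sum_cycleWeight_update B (mem_support.1 hp)]
    refine ih (disjoint_of_subset_left (subset_insert p U) hU)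
      (hσ.swap_mul (mem_support.1 hp) hpp) ?_
    have hpT : p ∉ ({a, b, c} : Finset ι) := disjoint_left.1 hU (mem_insert_self p U)
    rw [support_swap_mul_eq σ p hpp, hσU]
    ext y
    by_cases hy : y = p <;> simp_all

end CycleWeight

lemma sum_add_ne_zero_of_sq_eq {d : ℕ} (hd : 3 ≤ d) {r : ℝ} (hr : r ≠ 0) (t : Fin d → ℝ)
    (ht : ∀ j, t j ^ 2 = ((d - 1) * r) ^ 2) : ∑ j, (r + t j) ≠ 0 := by
  have hint : ∀ j, ∃ n : ℤ, t j = (d - 1) * r * n := fun j =>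
    (sq_eq_sq_iff_eq_or_eq_neg.1 (ht j)).elim (fun h => ⟨1, by simp [h]⟩)
      (fun h => ⟨-1, by simp [h]⟩)
  choose s hs using hint
  intro h
  have hN : (d : ℤ) + (d - 1) * ∑ j, s j = 0 := by
    have : r * ((d : ℝ) + (d - 1) * ∑ j, (s j : ℝ)) = 0 := by
      rw [← h, sum_add_distrib]
      simp only [hs, sum_const, card_univ, Fintype.card_fin, nsmul_eq_mul, ← mul_sum]
      ring
    exact_mod_cast (mul_eq_zero.1 this).resolve_left hr
  have : ((d : ℤ) - 1) * (∑ j, s j + 1) = -1 := by linarith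
  rcases Int.eq_one_or_neg_one_of_mul_eq_neg_one this with h1 | h1 <;> omega

lemma mem_nCycles {ι : Type} [Fintype ι] [DecidableEq ι] {σ : Perm ι} :
    σ ∈ nCycles ι ↔ σ.IsCycle ∧ σ.support = univ := by
  classical
  simp [nCycles]

namespace IsNUB

variable {ι : Type} [Fintype ι] [DecidableEq ι] {d : ℕ}
  {B : ι → OrthonormalBasis (Fin d) ℂ (EuclideanSpace ℂ (Fin d))} {a b c : ι}

lemma sum_cycleWeight (hB : IsNUB B) (x : ι → Fin d) :
    ∑ σ ∈ nCycles ι, cycleWeight B σ x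
      = ((Fintype.card ι - 1).factorial : ℂ) / (d : ℂ) ^ (Fintype.card ι - 1) :=
  hB x

lemma nCycles_nonempty (hB : IsNUB B) (hd : d ≠ 0) : (nCycles ι).Nonempty := by
  rw [nonempty_iff_ne_empty]
  intro h
  have hx := hB fun _ => ⟨0, Nat.pos_of_ne_zero hd⟩
  rw [h, sum_empty, eq_comm, div_eq_zero_iff] at hx
  simp [hd, Nat.factorial_ne_zero] at hx

lemma re_bargmann_eq (hB : IsNUB B) (hd : d ≠ 0) (hab : a ≠ b) (hac : a ≠ c) (hbc : b ≠ c)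
    (i j k i' j' k' : Fin d) :
    (bargmann (B a i) (B b j) (B c k)).re = (bargmann (B a i') (B b j') (B c k')).re := by
  set R : ℂ := ((Fintype.card ι - 1).factorial : ℂ) / (d : ℂ) ^ (Fintype.card ι - 1)
  have key : ∀ i j k, (#(nCycles ι) : ℝ) * (bargmann (B a i) (B b j) (B c k)).re
      = ((Fintype.card (Fin d) ^ #({a, b, c}ᶜ : Finset ι)) • R).re := by
    intro i j k
    set f : ι → Fin d := fun y => if y = a then i else if y = b then j else k
    have hf : f a = i ∧ f b = j ∧ f c = k := by simp [f, hab.symm, hac.symm, hbc.symm]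
    rw [← card_agreeOff _ f, ← sum_const, ← sum_congr rfl fun x _ => hB.sum_cycleWeight x,
      sum_comm, Complex.re_sum, ← nsmul_eq_mul, ← sum_const]
    refine sum_congr rfl fun σ hσ => ?_
    rw [mem_nCycles] at hσ
    rcases sum_agreeOff_cycleWeight B hab hac hbc f _ disjoint_compl_left hσ.1
      (by rw [hσ.2, union_comm, union_compl]) with h | h <;> rw [h, hf.1, hf.2.1, hf.2.2]
    rw [← conj_bargmann, Complex.conj_re]
  have hN : (#(nCycles ι) : ℝ) ≠ 0 := by
    exact_mod_cast (hB.nCycles_nonempty hd).card_pos.ne'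
  exact mul_left_cancel₀ hN ((key i j k).trans (key i' j' k').symm)

lemma re_bargmann (hB : IsNUB B) (hd : d ≠ 0) (hab : a ≠ b) (hac : a ≠ c) (hbc : b ≠ c)
    (i j k : Fin d) : (bargmann (B a i) (B b j) (B c k)).re = 1 / d ^ 2 := by
  have hrow : ∀ j', ‖⟪B a i, B b j'⟫_ℂ‖ ^ 2 = d * (bargmann (B a i) (B b j) (B c k)).re := by
    intro j'
    simp [← (B c).sum_re_bargmann, hB.re_bargmann_eq hd hab hac hbc i j' _ i j k]
  have hparseval := (B b).sum_sq_norm_inner_left (B a i)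
  simp only [hrow, (B a).orthonormal.1 i, sum_const, card_univ, Fintype.card_fin,
    nsmul_eq_mul] at hparseval
  field_simp
  linear_combination hparseval

lemma norm_sq_inner (hB : IsNUB B) (hd : d ≠ 0) (hab : a ≠ b) (hac : a ≠ c) (hbc : b ≠ c)
    (i j : Fin d) : ‖⟪B a i, B b j⟫_ℂ‖ ^ 2 = 1 / d := by
  simp [← (B c).sum_re_bargmann, hB.re_bargmann hd hab hac hbc]
  field_simp

lemma sq_im_bargmann (hB : IsNUB B) (hd : d ≠ 0) (hab : a ≠ b) (hac : a ≠ c) (hbc : b ≠ c)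
    (i j k : Fin d) : (bargmann (B a i) (B b j) (B c k)).im ^ 2 = (d - 1) * (1 / d ^ 4) := by
  rw [← Complex.sq_norm_sub_sq_re, norm_bargmann, mul_pow, mul_pow,
    hB.norm_sq_inner hd hab hac hbc, hB.norm_sq_inner hd hbc hab.symm hac.symm,
    hB.norm_sq_inner hd hac.symm hbc.symm hab, hB.re_bargmann hd hab hac hbc]
  field_simp

end IsNUB

theorem not_isNUB {ι : Type} [Fintype ι] [DecidableEq ι] {d : ℕ} (hd : 3 ≤ d)
    (hι : 3 ≤ Fintype.card ι) (B : ι → OrthonormalBasis (Fin d) ℂ (EuclideanSpace ℂ (Fin d))) :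
    ¬ IsNUB B := by
  intro hB
  obtain ⟨a, b, c, hab, hac, hbc⟩ := Fintype.two_lt_card_iff.1 hι
  have hd0 : d ≠ 0 := by omega
  let i₀ : Fin d := ⟨0, by omega⟩
  let i₁ : Fin d := ⟨1, by omega⟩
  let z (i j : Fin d) := bargmann (B a i) (B b j) (B c i₀)
  have horth : ∑ j, z i₀ j * conj (z i₁ j) = 0 := (B b).sum_bargmann_mul_conj_eq_zero
    ((B a).orthonormal.2 (by simp [i₀, i₁, Fin.ext_iff])) (B c i₀)
    (hB.norm_sq_inner hd0 hbc hab.symm hac.symm · i₀)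
  apply sum_add_ne_zero_of_sq_eq hd (r := 1 / d ^ 4) (by positivity)
    (fun j => (z i₀ j).im * (z i₁ j).im)
  · intro j
    rw [mul_pow, hB.sq_im_bargmann hd0 hab hac hbc, hB.sq_im_bargmann hd0 hab hac hbc]
    ring
  · have hre := congrArg Complex.re horth
    simp only [Complex.re_sum, Complex.mul_re, Complex.conj_re, Complex.conj_im, z,
      hB.re_bargmann hd0 hab hac hbc, Complex.zero_re] at hre
    rw [← hre]
    exact sum_congr rfl fun j _ => by ring

/-- There is no `n`-fold unbiased set of orthonormal bases in dimension 4 for any `n ≥ 3`;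
in particular no three orthonormal bases of `ℂ⁴` form a 3UB. -/
theorem stmt_13 (n : ℕ) (hn : 3 ≤ n)
    (B : Fin n → OrthonormalBasis (Fin 4) ℂ (EuclideanSpace ℂ (Fin 4))) :
    ¬ IsNUB B :=
  not_isNUB (by norm_num) (by simpa using hn) B
end
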